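/- arXiv:2204.09262 — 7 statements merged into one kernel-verified Lean document; each statement's English description precedes it below -/
import Mathlib

section
/- Let d be a nonzero integer, i ∈ ℤ/2ℤ, and j ∈ {0,1}. Then as ℂ-linear endomorphisms of ℂ[𝒫]: (i) 𝓡 ∘ op = ε ∘ 𝓡; (ii) op ∘ 𝓡 = 𝓡 ∘ ε; (iii) op ∘ 𝓗ʲ_{d,i} = (−1)ʲ · 𝓗ʲ_{d,i} ∘ op; (iv) ε ∘ op = Θ ∘ op ∘ ε (equivalently, for every array X, d(X^op) = d(X) − Def(X)). -/
/-!
Interchanging the rows of an array fixes `X^∪`, `X^∩`, `X^⊖` and hence `X_sp`, `s(X)` and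
`Sim(X)`, negates the defect, and replaces `X^♯` by `X^⊖ ⊖ X^♯`. Everything then rests on one
parity fact: `⟨Y^⊖, Y^♯⟩ ≡ d(Y) (mod 2)`, because `Def(Y) = |Y^⊖| - 2|Y^⊖ ∩ Y¹|` and likewise
for `Y_sp`, whose `⊖`-set is `Y^⊖`. For the hook operators, `op` maps `(d,i)`-hooks bijectively
to `(d,i)`-hooks, commutes with hook removal and preserves leg parities; only the factor
`(-1)^{jδ(λ)}` changes, by `(-1)^j`.
-/

open Finset

namespace ArrayComb

/-- Cells of an array: an element of ℤ × ℤ/2ℤ (arrays are those supported on ℕ × ℤ/2ℤ). -/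
abbrev Cell : Type := ℤ × ZMod 2

/-- An array is a finite subset of ℕ × ℤ/2ℤ. -/
def IsArray (X : Finset Cell) : Prop := ∀ c ∈ X, 0 ≤ c.1

/-- The row `Xʲ = {x : (x,j) ∈ X}`. -/
def row (X : Finset Cell) (j : ZMod 2) : Finset ℤ :=
  (X.filter fun c => c.2 = j).image Prod.fst

def cup (X : Finset Cell) : Finset ℤ := row X 0 ∪ row X 1
def cap (X : Finset Cell) : Finset ℤ := row X 0 ∩ row X 1
def sdiff' (X : Finset Cell) : Finset ℤ := symmDiff (row X 0) (row X 1)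

/-- The pairing `⟨A,B⟩ = |A ∩ B| mod 2`. -/
def pairing (A B : Finset ℤ) : ZMod 2 := ((A ∩ B).card : ZMod 2)

/-- The defect `Def(X) = |X⁰| - |X¹|`. -/
def defect (X : Finset Cell) : ℤ := ((row X 0).card : ℤ) - ((row X 1).card : ℤ)

/-- The special array `X_sp`. -/
noncomputable def sp (X : Finset Cell) : Finset Cell :=
  ((cap X) ×ˢ (Finset.univ : Finset (ZMod 2))) ∪
    (sdiff' X).image (fun x => (x, (((sdiff' X).card : ZMod 2) + pairing (sdiff' X) (Finset.Icc 0 x))))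

/-- `X^♯ = X¹ ⊖ (X_sp)¹`. -/
noncomputable def sharp (X : Finset Cell) : Finset ℤ := symmDiff (row X 1) (row (sp X) 1)

/-- `s(X) = 2^{(|X^⊖| - Def(X_sp))/2}`. -/
noncomputable def sconst (X : Finset Cell) : ℕ := 2 ^ (((sdiff' X).card - (defect (sp X)).toNat) / 2)

/-- `d(X) = (Def(X) - Def(X_sp))/2`. -/
noncomputable def dd (X : Finset Cell) : ℤ := (defect X - defect (sp X)) / 2

/-- The map `D_{d,i}` on cells. -/
def Dcell (d : ℤ) (i : ZMod 2) (c : Cell) : Cell := (c.1 - d, i + c.2)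

/-- The map `D_{d,i}` applied elementwise to a finite set of cells. -/
def Dset (d : ℤ) (i : ZMod 2) (H : Finset Cell) : Finset Cell := H.image (Dcell d i)

/-- `X ∖_{d,i} H = X ⊖ H ⊖ D_{d,i}(H)`. -/
def remove (d : ℤ) (i : ZMod 2) (X H : Finset Cell) : Finset Cell :=
  symmDiff (symmDiff X H) (Dset d i H)

/-- The `(d,i)`-hooks of `X`. -/
def hooks (d : ℤ) (i : ZMod 2) (X : Finset Cell) : Finset Cell :=
  X.filter fun c => 0 ≤ c.1 - d ∧ Dcell d i c ∉ X

/-- The leg parity `l_{d,i}(λ, X)`. -/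
noncomputable def leg (d : ℤ) (i : ZMod 2) (c : Cell) (X : Finset Cell) : ZMod 2 :=
  pairing (Finset.Icc 0 c.1) (row X c.2) +
    pairing (Finset.Icc 0 (c.1 - d)) (row (remove d i X {c}) (i + c.2))

/-- `X^op`, interchanging the two rows. -/
def opA (X : Finset Cell) : Finset Cell := Dset 0 1 X

/-- The free ℂ-module `ℂ[𝒫]` on the set of arrays. -/
abbrev CP := Finset Cell →₀ ℂ

/-- The similarity class `Sim(X)`: all arrays `Y` with `Y^∪ = X^∪` and `Y^∩ = X^∩`,
realized as a finite set. -/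
def SimSet (X : Finset Cell) : Finset (Finset Cell) :=
  ((cup X ×ˢ (Finset.univ : Finset (ZMod 2))).powerset).filter
    (fun Y => cup Y = cup X ∧ cap Y = cap X)

/-- The Fourier transform `𝓡` on basis elements. -/
noncomputable def Rfun (X : Finset Cell) : CP :=
  (sconst X : ℂ)⁻¹ •
    ∑ Y ∈ SimSet X, ((-1 : ℂ) ^ (pairing (sharp X) (sharp Y)).val) • Finsupp.single Y (1 : ℂ)

/-- The hook-removal operator `𝓗ʲ_{d,i}` on basis elements. -/
noncomputable def Hfun (d : ℤ) (i j : ZMod 2) (X : Finset Cell) : CP :=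
  ∑ c ∈ hooks d i X,
    ((-1 : ℂ) ^ (j * c.2 + leg d i c X).val) • Finsupp.single (remove d i X {c}) (1 : ℂ)

/-- Extension of a map defined on basis elements to a ℂ-linear endomorphism of `ℂ[𝒫]`. -/
noncomputable def lift (f : Finset Cell → CP) : CP →ₗ[ℂ] CP :=
  Finsupp.linearCombination ℂ f

/-- The operator `Θ`, `Θ(X) = (-1)^{Def(X)} X`, on basis elements. -/
noncomputable def Tfun (X : Finset Cell) : CP :=
  ((-1 : ℂ) ^ (defect X)) • Finsupp.single X (1 : ℂ)

/-- The operator `ε`, `ε(X) = (-1)^{d(X)} X`, on basis elements. -/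
noncomputable def Efun (X : Finset Cell) : CP :=
  ((-1 : ℂ) ^ (dd X)) • Finsupp.single X (1 : ℂ)

/-- The operator `op`, `op(X) = X^op`, on basis elements. -/
noncomputable def Ofun (X : Finset Cell) : CP := Finsupp.single (opA X) (1 : ℂ)

open scoped symmDiff

section Sign

variable {R : Type*} [Monoid R] [HasDistribNeg R]

lemma neg_one_pow_val_add (a b : ZMod 2) :
    (-1 : R) ^ (a + b).val = (-1) ^ a.val * (-1) ^ b.val := by
  conv_rhs => rw [← pow_add, ← Nat.mod_add_div (a.val + b.val) 2, pow_add, pow_mul, neg_one_sq,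
    one_pow, mul_one, ← ZMod.val_add]

lemma neg_one_pow_val_mul_self (a : ZMod 2) : (-1 : R) ^ a.val * (-1) ^ a.val = 1 := by
  rw [← pow_add, ← two_mul, pow_mul, neg_one_sq, one_pow]

end Sign

lemma neg_one_zpow_eq_pow_val {R : Type*} [DivisionMonoid R] [HasDistribNeg R] (n : ℤ) :
    (-1 : R) ^ n = (-1) ^ (n : ZMod 2).val := by
  rcases Int.even_or_odd n with h | h
  · rw [h.neg_one_zpow, ZMod.intCast_eq_zero_iff_even.2 h, ZMod.val_zero, pow_zero]
  · rw [h.neg_one_zpow, ZMod.intCast_eq_one_iff_odd.2 h, ZMod.val_one, pow_one]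

lemma natCast_card_symmDiff {α : Type*} [DecidableEq α] (s t : Finset α) :
    ((#(s ∆ t) : ℕ) : ZMod 2) = #s + #t := by
  have hst := card_sdiff_add_card_inter s t
  have hts := card_sdiff_add_card_inter t s
  rw [Finset.symmDiff_def, card_union_of_disjoint disjoint_sdiff_sdiff, ← hst, ← hts,
    inter_comm t s]
  push_cast
  ring_nf
  rw [show (2 : ZMod 2) = 0 from rfl, mul_zero, add_zero]

lemma pairing_comm (A B : Finset ℤ) : pairing A B = pairing B A := by
  rw [pairing, pairing, inter_comm]

lemma pairing_symmDiff_left (A B C : Finset ℤ) :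
    pairing (A ∆ B) C = pairing A C + pairing B C := by
  rw [pairing, ← inf_eq_inter, inf_symmDiff_distrib_right, natCast_card_symmDiff]
  rfl

lemma pairing_symmDiff_right (A B C : Finset ℤ) :
    pairing C (A ∆ B) = pairing C A + pairing C B := by
  rw [pairing_comm, pairing_symmDiff_left, pairing_comm A, pairing_comm B]

lemma mem_row {Y : Finset Cell} {x : ℤ} {j : ZMod 2} : x ∈ row Y j ↔ (x, j) ∈ Y := by
  simp [row]

lemma Dcell_zero_one_Dcell_zero_one (c : Cell) : Dcell 0 1 (Dcell 0 1 c) = c := by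
  simp only [Dcell, sub_zero, ← add_assoc, one_add_one_eq_two, CharTwo.two_eq_zero, zero_add]

lemma Dcell_zero_one_involutive : Function.Involutive (Dcell 0 1) :=
  Dcell_zero_one_Dcell_zero_one

lemma Dcell_zero_one_comm (d : ℤ) (i : ZMod 2) (c : Cell) :
    Dcell 0 1 (Dcell d i c) = Dcell d i (Dcell 0 1 c) := by
  simp only [Dcell, sub_zero]
  congr 1
  ring

lemma mem_opA {X : Finset Cell} {c : Cell} : c ∈ opA X ↔ Dcell 0 1 c ∈ X := by
  rw [opA, Dset, mem_image]
  exact ⟨fun ⟨a, ha, hac⟩ => hac ▸ (Dcell_zero_one_Dcell_zero_one a).symm ▸ ha,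
    fun hc => ⟨_, hc, Dcell_zero_one_Dcell_zero_one c⟩⟩

lemma opA_opA (X : Finset Cell) : opA (opA X) = X := by
  ext c
  rw [mem_opA, mem_opA, Dcell_zero_one_involutive]

lemma opA_symmDiff (A B : Finset Cell) : opA (A ∆ B) = opA A ∆ opA B :=
  image_symmDiff A B Dcell_zero_one_involutive.injective

lemma row_opA (X : Finset Cell) (j : ZMod 2) : row (opA X) j = row X (1 + j) := by
  ext x
  rw [mem_row, mem_row, mem_opA, Dcell, sub_zero]

lemma row_opA_zero (X : Finset Cell) : row (opA X) 0 = row X 1 := row_opA X 0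

lemma row_opA_one (X : Finset Cell) : row (opA X) 1 = row X 0 := row_opA X 1

lemma cup_opA (X : Finset Cell) : cup (opA X) = cup X := by
  rw [cup, cup, row_opA_zero, row_opA_one, union_comm]

lemma cap_opA (X : Finset Cell) : cap (opA X) = cap X := by
  rw [cap, cap, row_opA_zero, row_opA_one, inter_comm]

lemma sdiff'_opA (X : Finset Cell) : sdiff' (opA X) = sdiff' X := by
  rw [sdiff', sdiff', row_opA_zero, row_opA_one, symmDiff_comm]

lemma defect_opA (X : Finset Cell) : defect (opA X) = -defect X := by
  rw [defect, defect, row_opA_zero, row_opA_one, neg_sub]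

lemma sp_opA (X : Finset Cell) : sp (opA X) = sp X := by
  rw [sp, sp, cap_opA, sdiff'_opA]

lemma sharp_opA (X : Finset Cell) : sharp (opA X) = sdiff' X ∆ sharp X := by
  rw [sharp, sharp, row_opA_one, sp_opA, sdiff', symmDiff_assoc, symmDiff_symmDiff_cancel_left]

lemma sconst_opA (X : Finset Cell) : sconst (opA X) = sconst X := by
  rw [sconst, sconst, sdiff'_opA, sp_opA]

lemma SimSet_opA (X : Finset Cell) : SimSet (opA X) = SimSet X := by
  rw [SimSet, SimSet, cup_opA, cap_opA]

lemma opA_mem_SimSet {X Y : Finset Cell} (hY : Y ∈ SimSet X) : opA Y ∈ SimSet X := by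
  simp only [SimSet, mem_filter, mem_powerset, cup_opA, cap_opA] at hY ⊢
  refine ⟨fun c hc => ?_, hY.2⟩
  have := hY.1 (mem_opA.1 hc)
  simp_all [Dcell]

lemma opA_remove (d : ℤ) (i : ZMod 2) (X : Finset Cell) (c : Cell) :
    opA (remove d i X {c}) = remove d i (opA X) {Dcell 0 1 c} := by
  rw [remove, remove, opA_symmDiff, opA_symmDiff]
  simp only [opA, Dset, image_singleton, Dcell_zero_one_comm]

lemma Dcell_mem_hooks_opA {d : ℤ} {i : ZMod 2} {X : Finset Cell} {c : Cell}
    (hc : c ∈ hooks d i X) : Dcell 0 1 c ∈ hooks d i (opA X) := by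
  simp only [hooks, mem_filter, mem_opA, Dcell_zero_one_Dcell_zero_one,
    ← Dcell_zero_one_comm] at hc ⊢
  exact ⟨hc.1, by simpa [Dcell] using hc.2.1, hc.2.2⟩

lemma leg_opA (d : ℤ) (i : ZMod 2) (c : Cell) (X : Finset Cell) :
    leg d i (Dcell 0 1 c) (opA X) = leg d i c X := by
  have hδ : (Dcell 0 1 c).2 = 1 + c.2 := rfl
  rw [leg, leg, hδ, ← opA_remove, row_opA, row_opA, show (Dcell 0 1 c).1 = c.1 from sub_zero _]
  congr 3 <;> grind

lemma mem_sp {Z : Finset Cell} {x : ℤ} {j : ZMod 2} :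
    (x, j) ∈ sp Z ↔ x ∈ cap Z ∨
      x ∈ sdiff' Z ∧ (#(sdiff' Z) : ZMod 2) + pairing (sdiff' Z) (Icc 0 x) = j := by
  simp [sp]

lemma sdiff'_sp (Z : Finset Cell) : sdiff' (sp Z) = sdiff' Z := by
  ext x
  have hdisj : x ∈ sdiff' Z → x ∉ cap Z := by
    simp only [sdiff', cap, mem_symmDiff, mem_inter]
    tauto
  rw [sdiff', mem_symmDiff, mem_row, mem_row, mem_sp, mem_sp]
  generalize (#(sdiff' Z) : ZMod 2) + pairing (sdiff' Z) (Icc 0 x) = v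
  by_cases hc : x ∈ cap Z
  · simpa [hc] using fun h => hdisj h hc
  · obtain rfl | rfl : v = 0 ∨ v = 1 := by revert v; decide
    all_goals simp [hc]

lemma intCast_card_sub_card {α : Type*} [DecidableEq α] (A B : Finset α) :
    (#A : ℤ) - #B = #(A ∆ B) - 2 * #(A ∆ B ∩ B) := by
  have hAB := card_sdiff_add_card_inter A B
  have hBA := card_sdiff_add_card_inter B A
  have hinter : A ∆ B ∩ B = B \ A := by
    ext
    simp only [mem_inter, mem_symmDiff, mem_sdiff]
    tauto
  rw [hinter, Finset.symmDiff_def, card_union_of_disjoint disjoint_sdiff_sdiff, inter_comm B] at *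
  omega

lemma defect_eq (Z : Finset Cell) : defect Z = #(sdiff' Z) - 2 * #(sdiff' Z ∩ row Z 1) :=
  intCast_card_sub_card _ _

lemma defect_sp_eq (Z : Finset Cell) :
    defect (sp Z) = #(sdiff' Z) - 2 * #(sdiff' Z ∩ row (sp Z) 1) := by
  rw [defect_eq, sdiff'_sp]

lemma dd_eq (Z : Finset Cell) : dd Z = #(sdiff' Z ∩ row (sp Z) 1) - #(sdiff' Z ∩ row Z 1) := by
  rw [dd, defect_eq, defect_sp_eq]
  omega

lemma two_mul_dd (Z : Finset Cell) : 2 * dd Z = defect Z - defect (sp Z) := by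
  rw [dd_eq, defect_eq, defect_sp_eq]
  ring

lemma pairing_sdiff'_sharp (Y : Finset Cell) : pairing (sdiff' Y) (sharp Y) = dd Y := by
  rw [sharp, pairing_symmDiff_right, dd_eq, pairing, pairing]
  push_cast
  rw [sub_eq_add_neg, ZMod.neg_eq_self_mod_two, add_comm]

lemma sdiff'_of_mem_SimSet {X Y : Finset Cell} (hY : Y ∈ SimSet X) : sdiff' Y = sdiff' X := by
  simp only [SimSet, mem_filter] at hY
  have hcup : row Y 0 ⊔ row Y 1 = row X 0 ⊔ row X 1 := hY.2.1
  have hcap : row Y 0 ⊓ row Y 1 = row X 0 ⊓ row X 1 := hY.2.2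
  rw [sdiff', sdiff', symmDiff_eq_sup_sdiff_inf, symmDiff_eq_sup_sdiff_inf, hcup, hcap]

lemma lift_single (f : Finset Cell → CP) (Y : Finset Cell) (c : ℂ) :
    lift f (Finsupp.single Y c) = c • f Y :=
  Finsupp.linearCombination_single ℂ c Y

lemma lift_Efun (f : Finset Cell → CP) (X : Finset Cell) :
    lift f (Efun X) = (-1 : ℂ) ^ dd X • f X := by
  rw [Efun, map_smul, lift_single, one_smul]

lemma Rfun_opA (X : Finset Cell) : Rfun (opA X) = lift Efun (Rfun X) := by
  rw [Rfun, Rfun, SimSet_opA, sconst_opA, map_smul, map_sum]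
  congr 1
  refine sum_congr rfl fun Y hY => ?_
  rw [map_smul, lift_single, one_smul, Efun, smul_smul, sharp_opA, pairing_symmDiff_left,
    ← sdiff'_of_mem_SimSet hY, pairing_sdiff'_sharp, neg_one_pow_val_add,
    ← neg_one_zpow_eq_pow_val, mul_comm]

lemma lift_Ofun_Rfun (X : Finset Cell) : lift Ofun (Rfun X) = lift Rfun (Efun X) := by
  rw [lift_Efun, Rfun, map_smul, smul_comm ((-1 : ℂ) ^ dd X)]
  congr 1
  rw [map_sum, Finset.smul_sum]
  simp only [map_smul, lift_single, one_smul, Ofun, smul_smul]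
  refine sum_bij' (fun Y _ => opA Y) (fun Y _ => opA Y) (fun _ hY => opA_mem_SimSet hY)
    (fun _ hY => opA_mem_SimSet hY) (fun Y _ => opA_opA Y) (fun Y _ => opA_opA Y) fun Y hY => ?_
  congr 1
  rw [sharp_opA, pairing_symmDiff_right, sdiff'_of_mem_SimSet hY,
    pairing_comm (sharp X) (sdiff' X), pairing_sdiff'_sharp, neg_one_pow_val_add, ← neg_one_zpow_eq_pow_val, ← mul_assoc,
    ← mul_zpow, neg_one_mul, neg_neg, one_zpow, one_mul]

lemma lift_Ofun_Hfun (d : ℤ) (i j : ZMod 2) (X : Finset Cell) :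
    lift Ofun (Hfun d i j X) = (-1 : ℂ) ^ j.val • Hfun d i j (opA X) := by
  rw [Hfun, Hfun, map_sum, Finset.smul_sum]
  simp only [map_smul, lift_single, one_smul, Ofun, smul_smul]
  refine sum_bij' (fun c _ => Dcell 0 1 c) (fun c _ => Dcell 0 1 c)
    (fun _ => Dcell_mem_hooks_opA) (fun c hc => opA_opA X ▸ Dcell_mem_hooks_opA hc)
    (fun c _ => Dcell_zero_one_Dcell_zero_one c) (fun c _ => Dcell_zero_one_Dcell_zero_one c)
    fun c _ => ?_
  have hδ : (Dcell 0 1 c).2 = 1 + c.2 := rfl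
  rw [← opA_remove, leg_opA, hδ, mul_add, mul_one, add_assoc, neg_one_pow_val_add j,
    ← mul_assoc, neg_one_pow_val_mul_self, one_mul]

lemma dd_opA (X : Finset Cell) : dd (opA X) = dd X - defect X := by
  have h := two_mul_dd X
  have hop := two_mul_dd (opA X)
  rw [sp_opA, defect_opA] at hop
  omega

lemma Efun_opA (X : Finset Cell) : Efun (opA X) = lift Tfun (lift Ofun (Efun X)) := by
  rw [lift_Efun, map_smul, Ofun, lift_single, one_smul, Efun, Tfun, smul_smul, dd_opA,
    defect_opA, ← zpow_add₀ (by norm_num), sub_eq_add_neg]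

theorem fourier_op_general (d : ℤ) (i j : ZMod 2) (X : Finset Cell) :
    Rfun (opA X) = lift Efun (Rfun X) ∧
    lift Ofun (Rfun X) = lift Rfun (Efun X) ∧
    lift Ofun (Hfun d i j X) = ((-1 : ℂ) ^ j.val) • Hfun d i j (opA X) ∧
    Efun (opA X) = lift Tfun (lift Ofun (Efun X)) ∧
    dd (opA X) = dd X - defect X :=
  ⟨Rfun_opA X, lift_Ofun_Rfun X, lift_Ofun_Hfun d i j X, Efun_opA X, dd_opA X⟩

/-- Compatibilities of the Fourier transform and hook operators with `op`, `ε`, `Θ`: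
(i) `𝓡 ∘ op = ε ∘ 𝓡`; (ii) `op ∘ 𝓡 = 𝓡 ∘ ε`; (iii) `op ∘ 𝓗ʲ_{d,i} = (-1)ʲ 𝓗ʲ_{d,i} ∘ op`;
(iv) `ε ∘ op = Θ ∘ op ∘ ε`, equivalently `d(X^op) = d(X) - Def(X)`. -/
theorem fourier_op (d : ℤ) (hd : d ≠ 0) (i j : ZMod 2) (X : Finset Cell) (hX : IsArray X) :
    Rfun (opA X) = lift Efun (Rfun X) ∧
    lift Ofun (Rfun X) = lift Rfun (Efun X) ∧
    lift Ofun (Hfun d i j X) = ((-1 : ℂ) ^ j.val) • Hfun d i j (opA X) ∧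
    Efun (opA X) = lift Tfun (lift Ofun (Efun X)) ∧
    dd (opA X) = dd X - defect X :=
  fourier_op_general d i j X

end ArrayComb
end

section
/- Let X be an array and let λ ∈ 𝓗_{e,j}(X) be an (e,j)-hook of X for some (e,j) ∈ ℕ×(ℤ/2ℤ). Then for every (d,i) ∈ ℕ×(ℤ/2ℤ), 𝓗_{d,i}(X) ⊆ 𝓗_{d,i}(X∖_{e,j}λ) ∪ {λ, D_{e−d,i+j}(λ)}. -/
open Finset

namespace ArrayComb

theorem mem_hooks {d : ℤ} {i : ZMod 2} {X : Finset Cell} {c : Cell} :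
    c ∈ hooks d i X ↔ c ∈ X ∧ 0 ≤ c.1 - d ∧ Dcell d i c ∉ X :=
  mem_filter

theorem Dcell_eq_Dcell_iff {d e : ℤ} {i j : ZMod 2} {c c' : Cell} :
    Dcell d i c = Dcell e j c' ↔ c = Dcell (e - d) (i + j) c' := by
  simp only [Dcell, Prod.ext_iff]
  constructor <;> rintro ⟨h₁, h₂⟩ <;> refine ⟨by omega, ?_⟩ <;> grind

theorem mem_remove_singleton_of_ne {d : ℤ} {i : ZMod 2} {X : Finset Cell} {c lam : Cell}
    (h : c ≠ lam) (h' : c ≠ Dcell d i lam) : c ∈ remove d i X {lam} ↔ c ∈ X := by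
  simp [remove, Dset, mem_symmDiff, h, h']

theorem hook_inclusion_general (X : Finset Cell) (e : ℕ) (j : ZMod 2)
    (lam : Cell) (hlam : lam ∈ hooks (e : ℤ) j X) (d : ℕ) (i : ZMod 2) :
    hooks (d : ℤ) i X ⊆
      hooks (d : ℤ) i (remove (e : ℤ) j X {lam}) ∪
        ({lam, Dcell ((e : ℤ) - (d : ℤ)) (i + j) lam} : Finset Cell) := by
  intro c hc
  obtain ⟨hcX, hcd, hcD⟩ := mem_hooks.1 hc
  obtain ⟨hlX, -, hlD⟩ := mem_hooks.1 hlam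
  by_cases hc' : c = lam ∨ c = Dcell ((e : ℤ) - (d : ℤ)) (i + j) lam
  · exact mem_union_right _ (by simpa using hc')
  push Not at hc'
  refine mem_union_left _ (mem_hooks.2 ⟨?_, hcd, ?_⟩)
  · rwa [mem_remove_singleton_of_ne hc'.1 fun h => hlD (h ▸ hcX)]
  · rwa [mem_remove_singleton_of_ne (fun h => hcD (by rwa [h]))
      (fun h => hc'.2 (Dcell_eq_Dcell_iff.1 h))]

/-- Hook inclusion: if `λ` is an `(e,j)`-hook of `X`, then every `(d,i)`-hook of `X` is
either a `(d,i)`-hook of `X∖_{e,j}λ` or one of `λ`, `D_{e-d,i+j}(λ)`. -/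
theorem hook_inclusion (X : Finset Cell) (hX : IsArray X) (e : ℕ) (j : ZMod 2)
    (lam : Cell) (hlam : lam ∈ hooks (e : ℤ) j X) (d : ℕ) (i : ZMod 2) :
    hooks (d : ℤ) i X ⊆
      hooks (d : ℤ) i (remove (e : ℤ) j X {lam}) ∪
        ({lam, Dcell ((e : ℤ) - (d : ℤ)) (i + j) lam} : Finset Cell) :=
  hook_inclusion_general X e j lam hlam d i

end ArrayComb
end

section
/- If w ∈ W_I is an I-cycle, then the centralizer of w in W_I equals ⟨w⟩ when δ_I(w) = 1 (w is an odd permutation), and equals ⟨w, σ⟩ when δ_I(w) = 0 (w is an even permutation); in either case |C_{W_I}(w)| = 2n = |I|. -/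
/-!
The group `A = ⟨w, σ⟩` is abelian and transitive on `I`. A permutation commuting with a
transitive group is determined by its value at a single point, so `A` acts regularly and is
its own centralizer; hence `C_{W_I}(w) = C(A) = A` has order `|I|`. If `σ ∉ ⟨w⟩`, then `σ a`
does not lie on the `w`-cycle of `a` (otherwise `σ = w^k`, both being determined by their value
at `a`), and the two cycles through `a` and `σ a` cover `I`. So `w` is the product of a cycle
and its `σ`-conjugate, hence even. For odd `w` this forces `σ ∈ ⟨w⟩`, i.e. `A = ⟨w⟩`.
-/

open Subgroup
open scoped Pointwise

namespace Subgroup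

variable {G : Type*} [Group G]

theorem isMulCommutative_closure_pair {a b : G} (h : Commute a b) :
    IsMulCommutative (closure {a, b}) :=
  isMulCommutative_closure <| by
    rintro x (rfl | rfl) y (rfl | rfl)
    exacts [rfl, h.eq, h.eq.symm, rfl]

theorem centralizer_pair (a b : G) : centralizer {a, b} = centralizer {a} ⊓ centralizer {b} := by
  ext x
  simp [mem_centralizer_iff]

theorem closure_pair_eq_zpowers {a b : G} (hb : b ∈ zpowers a) : closure {a, b} = zpowers a :=
  le_antisymm
    (closure_le _ |>.mpr <| Set.insert_subset (mem_zpowers a) (Set.singleton_subset_iff.mpr hb))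
    (zpowers_le.mpr <| subset_closure (Set.mem_insert a _))

end Subgroup

namespace Equiv.Perm

variable {α : Type*}

section Centralizer

variable {G : Subgroup (Perm α)}

theorem eq_of_mem_centralizer_of_apply_eq (hG : ∀ a b, ∃ g ∈ G, g a = b) {c d : Perm α}
    (hc : c ∈ centralizer G) (hd : d ∈ centralizer G) {a : α} (h : c a = d a) : c = d := by
  ext b
  obtain ⟨g, hg, rfl⟩ := hG a b
  calc c (g a) = (g * c) a := (congrArg (· a) (hc g hg)).symm
    _ = (g * d) a := by rw [mul_apply, mul_apply, h]
    _ = d (g a) := congrArg (· a) (hd g hg)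

theorem centralizer_eq_self_of_isMulCommutative (hG : ∀ a b, ∃ g ∈ G, g a = b)
    [IsMulCommutative G] : centralizer (G : Set (Perm α)) = G := by
  refine le_antisymm (fun c hc => ?_) (le_centralizer G)
  rcases isEmpty_or_nonempty α with _ | ⟨⟨a⟩⟩
  · exact Subsingleton.elim 1 c ▸ G.one_mem
  obtain ⟨g, hg, hga⟩ := hG a (c a)
  rwa [eq_of_mem_centralizer_of_apply_eq hG hc (le_centralizer G hg) hga.symm]

theorem card_eq_of_isMulCommutative [Nonempty α] (hG : ∀ a b, ∃ g ∈ G, g a = b)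
    [IsMulCommutative G] : Nat.card G = Nat.card α := by
  obtain ⟨a⟩ := ‹Nonempty α›
  refine Nat.card_eq_of_bijective (fun g : G => (g : Perm α) a) ⟨fun g h hgh => ?_, fun b => ?_⟩
  · exact Subtype.ext <| eq_of_mem_centralizer_of_apply_eq hG (le_centralizer G g.2)
      (le_centralizer G h.2) hgh
  · obtain ⟨g, hg, hgb⟩ := hG a b
    exact ⟨⟨g, hg⟩, hgb⟩

end Centralizer

section SameCycle

variable {f g : Perm α}

theorem sameCycle_apply_apply_of_commute (h : Commute g f) {x y : α} :
    SameCycle f (g x) (g y) ↔ SameCycle f x y := by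
  simpa [h.mul_inv_cancel] using sameCycle_conj (f := f) (g := g) (x := g x) (y := g y)

theorem cycleOf_apply_of_commute [DecidableRel f.SameCycle] (h : Commute g f) (x : α) :
    cycleOf f (g x) = g * cycleOf f x * g⁻¹ := by
  ext y
  obtain ⟨y, rfl⟩ := g.surjective y
  simp only [cycleOf_apply, mul_apply, coe_inv, symm_apply_apply,
    sameCycle_apply_apply_of_commute h]
  split_ifs
  · exact congrArg (· y) h.eq.symm
  · rfl

theorem eq_cycleOf_mul_cycleOf [DecidableRel f.SameCycle] {a b : α} (hab : ¬SameCycle f a b)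
    (hcover : ∀ x, SameCycle f a x ∨ SameCycle f b x) : f = cycleOf f a * cycleOf f b := by
  ext x
  rw [mul_apply]
  rcases hcover x with hx | hx
  · rw [cycleOf_apply_of_not_sameCycle fun hbx => hab (hx.trans hbx.symm), hx.cycleOf_apply]
  · rw [hx.cycleOf_apply, cycleOf_apply_of_not_sameCycle fun hax =>
      hab (sameCycle_apply_right.mp hax |>.trans hx.symm)]

theorem sign_eq_one_of_commute_of_not_sameCycle [Fintype α] [DecidableEq α] (h : Commute g f)
    {a : α} (ha : ¬SameCycle f a (g a)) (hcover : ∀ x, SameCycle f a x ∨ SameCycle f (g a) x) :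
    sign f = 1 := by
  rw [eq_cycleOf_mul_cycleOf ha hcover, cycleOf_apply_of_commute h]
  simp only [map_mul, sign_inv]
  rw [mul_right_comm (sign g), Int.units_mul_self, one_mul, Int.units_mul_self]

theorem sameCycle_or_sameCycle_apply_of_mem_closure (h : Commute g f) (hg : g * g = 1)
    {p : Perm α} (hp : p ∈ closure {f, g}) (a : α) :
    SameCycle f a (p a) ∨ SameCycle f (g a) (p a) := by
  let S : Set α := {x | SameCycle f a x ∨ SameCycle f (g a) x}
  have hle : closure {f, g} ≤ MulAction.stabilizer (Perm α) S := by
    rw [closure_le, Set.insert_subset_iff, Set.singleton_subset_iff]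
    refine ⟨MulAction.mem_stabilizer_set.mpr fun x => ?_,
      MulAction.mem_stabilizer_set.mpr fun x => ?_⟩
    · simp only [S, Set.mem_ofPred_eq, Perm.smul_def, sameCycle_apply_right]
    · have hgg : ∀ y, g (g y) = y := fun y => congrArg (· y) hg
      simp only [S, Set.mem_ofPred_eq, Perm.smul_def]
      nth_rw 1 [← hgg a]
      rw [sameCycle_apply_apply_of_commute h, sameCycle_apply_apply_of_commute h, or_comm]
  exact (MulAction.mem_stabilizer_set.mp (hle hp) a).mpr (Or.inl (.refl f a))

end SameCycle

theorem mem_zpowers_of_sign_eq_neg_one [Fintype α] [DecidableEq α] {f g : Perm α}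
    (h : Commute g f) (hg : g * g = 1) (htrans : ∀ a b, ∃ p ∈ closure {f, g}, p a = b)
    (hsign : sign f = -1) : g ∈ zpowers f := by
  rcases isEmpty_or_nonempty α with _ | ⟨⟨a⟩⟩
  · exact Subsingleton.elim 1 g ▸ (zpowers f).one_mem
  have := isMulCommutative_closure_pair h.symm
  by_cases hsame : SameCycle f a (g a)
  · obtain ⟨k, hk⟩ := hsame
    have hmem : ∀ {p}, p ∈ ({f, g} : Set (Perm α)) → p ∈ centralizer (closure {f, g}) :=
      fun hp => le_centralizer _ (subset_closure hp)
    exact ⟨k, eq_of_mem_centralizer_of_apply_eq htrans (zpow_mem (hmem (.inl rfl)) k)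
      (hmem (.inr rfl)) hk⟩
  · refine absurd (sign_eq_one_of_commute_of_not_sameCycle h hsame fun x => ?_)
      (by rw [hsign]; decide)
    obtain ⟨p, hp, rfl⟩ := htrans a x
    exact sameCycle_or_sameCycle_apply_of_mem_closure h hg hp a

end Equiv.Perm

open Equiv.Perm

theorem cent_I_cycle_general {I : Type*} [Fintype I] [DecidableEq I] (n : ℕ) (hn : 1 ≤ n)
    (hcard : Fintype.card I = 2 * n)
    (σ : Equiv.Perm I) (hinv : σ * σ = 1)
    (w : Equiv.Perm I) (hw : w ∈ Subgroup.centralizer ({σ} : Set (Equiv.Perm I)))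
    (hcyc : ∀ a b : I, ∃ g ∈ Subgroup.closure ({w, σ} : Set (Equiv.Perm I)), g a = b) :
    (Equiv.Perm.sign w = -1 →
      Subgroup.centralizer ({σ} : Set (Equiv.Perm I)) ⊓
          Subgroup.centralizer ({w} : Set (Equiv.Perm I)) = Subgroup.zpowers w) ∧
    (Equiv.Perm.sign w = 1 →
      Subgroup.centralizer ({σ} : Set (Equiv.Perm I)) ⊓
          Subgroup.centralizer ({w} : Set (Equiv.Perm I)) =
        Subgroup.closure ({w, σ} : Set (Equiv.Perm I))) ∧
    Nat.card ↥(Subgroup.centralizer ({σ} : Set (Equiv.Perm I)) ⊓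
        Subgroup.centralizer ({w} : Set (Equiv.Perm I))) = 2 * n := by
  have hσw : Commute σ w := (mem_centralizer_singleton_iff.mp hw).symm
  have := isMulCommutative_closure_pair hσw.symm
  have hC : centralizer {σ} ⊓ centralizer {w} = closure ({w, σ} : Set (Equiv.Perm I)) := by
    rw [← centralizer_eq_self_of_isMulCommutative hcyc, centralizer_closure, centralizer_pair,
      inf_comm]
  have : Nonempty I := Fintype.card_pos_iff.mp (by omega)
  refine ⟨fun hsign => ?_, fun _ => hC, ?_⟩
  · rw [hC, closure_pair_eq_zpowers (mem_zpowers_of_sign_eq_neg_one hσw hinv hcyc hsign)]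
  · rw [hC, card_eq_of_isMulCommutative hcyc, Nat.card_eq_fintype_card, hcard]

/-- Centralizer of an `I`-cycle in the hyperoctahedral group `W_I = C_{Sym(I)}(σ)`:
it is `⟨w⟩` if `w` is odd, and `⟨w,σ⟩` if `w` is even; in either case it has order
`2n = |I|`. -/
theorem cent_I_cycle {I : Type*} [Fintype I] [DecidableEq I] (n : ℕ) (hn : 1 ≤ n)
    (hcard : Fintype.card I = 2 * n)
    (σ : Equiv.Perm I) (hinv : σ * σ = 1) (hfpf : ∀ a : I, σ a ≠ a)
    (w : Equiv.Perm I) (hw : w ∈ Subgroup.centralizer ({σ} : Set (Equiv.Perm I)))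
    (hcyc : ∀ a b : I, ∃ g ∈ Subgroup.closure ({w, σ} : Set (Equiv.Perm I)), g a = b) :
    (Equiv.Perm.sign w = -1 →
      Subgroup.centralizer ({σ} : Set (Equiv.Perm I)) ⊓
          Subgroup.centralizer ({w} : Set (Equiv.Perm I)) = Subgroup.zpowers w) ∧
    (Equiv.Perm.sign w = 1 →
      Subgroup.centralizer ({σ} : Set (Equiv.Perm I)) ⊓
          Subgroup.centralizer ({w} : Set (Equiv.Perm I)) =
        Subgroup.closure ({w, σ} : Set (Equiv.Perm I))) ∧
    Nat.card ↥(Subgroup.centralizer ({σ} : Set (Equiv.Perm I)) ⊓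
        Subgroup.centralizer ({w} : Set (Equiv.Perm I))) = 2 * n :=
  cent_I_cycle_general n hn hcard σ hinv w hw hcyc
end

section
/- Let w ∈ W_I have cycle decomposition w = w_1⋯w_k with orbits O_1,…,O_k, and let I = I_1 ⊔ ⋯ ⊔ I_m be a decomposition into σ-stable subsets such that the subgroup P := W_{I_1}⋯W_{I_m} ≤ W_I contains w. If w has pairwise distinct cycles, then: (i) C_{W_I}(w) = C_{W_{O_1}}(w_1)⋯C_{W_{O_k}}(w_k); (ii) |C_{W_I}(w)| ≤ 2^k · n^k; (iii) C_P(w) = C_{W_I}(w). -/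
/-!
An element `x` of `C_{W_I}(w)` commutes with every element of `⟨w, σ⟩`, so it permutes the orbits
`O_i`. If it carries `O_i` onto `O_j`, it conjugates the cycle `w_i` into `w_j`, so these cycles
have the same size and sign, and pairwise distinctness forces `i = j`. Hence `x` stabilises every
`O_i` and is the product of its restrictions to them, each of which centralises `σ` and `w_i`.
Being `⟨w, σ⟩`-equivariant, `x` is determined by its values at one point of each orbit, which gives
`|C_{W_I}(w)| ≤ (2n)^k`. Finally `w ∈ P` and `σ` stabilise each block `I_s`, so every orbit lies in
a single block and all the factors `W_{O_i}` lie in `P`.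
-/

/-- The subgroup `W_O` of `W_I = C_{Sym(I)}(σ)` consisting of elements fixing `I ∖ O`
pointwise. -/
def WO {I : Type*} [Fintype I] [DecidableEq I] (σ : Equiv.Perm I) (O : Finset I) :
    Subgroup (Equiv.Perm I) :=
  Subgroup.centralizer ({σ} : Set (Equiv.Perm I)) ⊓
    fixingSubgroup (Equiv.Perm I) ((↑O : Set I)ᶜ)

open Equiv Function MulAction
open scoped Pointwise

section

variable {I : Type*}

namespace Equiv.Perm

lemma apply_comm_of_mem_centralizer {S : Set (Perm I)} {x g : Perm I}
    (hx : x ∈ Subgroup.centralizer S) (hg : g ∈ S) (a : I) : x (g a) = g (x a) :=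
  (DFunLike.congr_fun (Subgroup.mem_centralizer_iff.mp hx g hg) a).symm

lemma apply_mem_iff_of_mem_stabilizer {g : Perm I} {O : Set I}
    (hg : g ∈ stabilizer (Perm I) O) (a : I) : g a ∈ O ↔ a ∈ O := by
  have := Set.smul_mem_smul_set_iff (a := g) (s := O) (x := a)
  rwa [mem_stabilizer_iff.mp hg] at this

lemma mem_stabilizer_of_mapsTo {g : Perm I} {O : Finset I} (h : ∀ a ∈ O, g a ∈ O) :
    g ∈ stabilizer (Perm I) (O : Set I) :=
  (mem_stabilizer_set_iff_smul_set_subset O.finite_toSet).2 (Set.smul_set_subset_iff.2 h)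

lemma fixingSubgroup_compl_le_stabilizer (O : Set I) :
    fixingSubgroup (Perm I) Oᶜ ≤ stabilizer (Perm I) O := by
  simpa using fixingSubgroup_le_stabilizer (Perm I) Oᶜ

lemma card_eq_of_apply_mem_iff {x : Perm I} {O O' : Finset I} (h : ∀ a, x a ∈ O' ↔ a ∈ O) :
    O.card = O'.card :=
  Finset.card_nbij' x x.symm (fun a ha => (h a).2 ha)
    (fun a ha => (h _).1 (by simpa using ha)) (fun a _ => by simp) (fun a _ => by simp)

variable [DecidableEq I]

def restrict (x : Perm I) (O : Finset I) (h : ∀ a, x a ∈ O ↔ a ∈ O) : Perm I :=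
  ofSubtype (x.subtypePerm (p := (· ∈ O)) h)

section restrict

variable {x : Perm I} {O : Finset I} {h : ∀ a, x a ∈ O ↔ a ∈ O} {a : I}

lemma restrict_apply_of_mem (ha : a ∈ O) : restrict x O h a = x a :=
  ofSubtype_apply_of_mem _ ha

lemma restrict_apply_of_notMem (ha : a ∉ O) : restrict x O h a = a :=
  ofSubtype_apply_of_not_mem _ ha

lemma restrict_apply_mem_iff (a : I) : restrict x O h a ∈ O ↔ a ∈ O :=
  ofSubtype_apply_mem_iff_mem _ a

lemma commute_restrict_left {g : Perm I} (hxg : Commute x g) (hg : ∀ a, g a ∈ O ↔ a ∈ O) :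
    Commute (restrict x O h) g := by
  refine Equiv.ext fun a => ?_
  simp only [Perm.mul_apply]
  by_cases ha : a ∈ O
  · rw [restrict_apply_of_mem ((hg a).2 ha), restrict_apply_of_mem ha, ← Perm.mul_apply, hxg.eq]
    rfl
  · rw [restrict_apply_of_notMem (mt (hg a).1 ha), restrict_apply_of_notMem ha]

end restrict

lemma sign_eq_of_apply_mem_iff [Fintype I] {x w wp wp' : Perm I} {O O' : Finset I}
    (hxw : Commute x w) (h : ∀ a, x a ∈ O' ↔ a ∈ O)
    (hwp₁ : ∀ a ∈ O, wp a = w a) (hwp₂ : ∀ a ∉ O, wp a = a)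
    (hwp'₁ : ∀ a ∈ O', wp' a = w a) (hwp'₂ : ∀ a ∉ O', wp' a = a) :
    sign wp = sign wp' := by
  have hconj : x * wp * x⁻¹ = wp' := by
    refine Equiv.ext fun b => ?_
    simp only [Perm.mul_apply]
    by_cases hb : b ∈ O'
    · have hb' : x⁻¹ b ∈ O := (h _).1 (by simpa using hb)
      rw [hwp₁ _ hb', hwp'₁ b hb, ← Perm.mul_apply, hxw.eq]
      simp
    · have hb' : x⁻¹ b ∉ O := fun hb' => hb (by simpa using (h _).2 hb')
      rw [hwp₂ _ hb', hwp'₂ b hb]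
      simp
  rw [← hconj, sign_mul, sign_mul, sign_inv, mul_right_comm, Int.units_mul_self, one_mul]

lemma commute_of_mem_fixingSubgroup_compl {y w wp : Perm I} {O : Finset I}
    (hy : y ∈ fixingSubgroup (Perm I) (O : Set I)ᶜ) (hw : ∀ a, w a ∈ O ↔ a ∈ O)
    (hwp : ∀ a ∈ O, wp a = w a) (h : Commute y wp) : Commute y w := by
  have hfix : ∀ a ∉ O, y a = a := fun a ha => (mem_fixingSubgroup_iff _).1 hy a ha
  have hyO := apply_mem_iff_of_mem_stabilizer (fixingSubgroup_compl_le_stabilizer _ hy)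
  refine Equiv.ext fun a => ?_
  simp only [Perm.mul_apply]
  by_cases ha : a ∈ O
  · rw [← hwp a ha, ← hwp (y a) ((hyO a).2 ha), ← Perm.mul_apply, h.eq]
    rfl
  · rw [hfix a ha, hfix (w a) (mt (hw a).1 ha)]

theorem mem_iSup_of_restrict_mem {ι : Type*} [Fintype ι] {O : ι → Finset I}
    (hdisj : Pairwise (_root_.Disjoint on O)) (hcover : ∀ a, ∃ i, a ∈ O i)
    {H : ι → Subgroup (Perm I)} {x : Perm I} (hx : ∀ i a, x a ∈ O i ↔ a ∈ O i)
    (hH : ∀ i, restrict x (O i) (hx i) ∈ H i) : x ∈ ⨆ i, H i := by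
  classical
  have key : ∀ S : Finset ι, ∃ y ∈ ⨆ i, H i, ∀ a, y a = if a ∈ S.biUnion O then x a else a := by
    intro S
    induction S using Finset.induction_on with
    | empty => exact ⟨1, one_mem _, by simp⟩
    | insert i S hi ih =>
      obtain ⟨y, hy, hya⟩ := ih
      refine ⟨restrict x (O i) (hx i) * y, mul_mem (Subgroup.mem_iSup_of_mem i (hH i)) hy,
        fun a => ?_⟩
      have hS : _root_.Disjoint (O i) (S.biUnion O) := Finset.disjoint_biUnion_right _ _ _ |>.2
        fun j hj => hdisj (ne_of_mem_of_not_mem hj hi).symm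
      have hxS : ∀ a, x a ∈ S.biUnion O ↔ a ∈ S.biUnion O := by simp [Finset.mem_biUnion, hx]
      simp only [Perm.mul_apply, hya, Finset.biUnion_insert, Finset.mem_union]
      by_cases ha : a ∈ O i
      · simp [Finset.disjoint_left.1 hS ha, restrict_apply_of_mem ha, ha]
      · by_cases haS : a ∈ S.biUnion O
        · rw [if_pos haS, if_pos (Or.inr haS),
            restrict_apply_of_notMem (Finset.disjoint_right.1 hS ((hxS a).2 haS))]
        · rw [if_neg haS, if_neg (not_or.2 ⟨ha, haS⟩), restrict_apply_of_notMem ha]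
  obtain ⟨y, hy, hya⟩ := key Finset.univ
  convert hy
  ext a
  obtain ⟨i, hi⟩ := hcover a
  simp [hya, Finset.mem_biUnion.2 ⟨i, Finset.mem_univ i, hi⟩]

end Equiv.Perm

def IsOrbitOf (G : Subgroup (Perm I)) (O : Finset I) : Prop :=
  ∀ a ∈ O, ∀ b, b ∈ O ↔ ∃ g ∈ G, g a = b

namespace IsOrbitOf

variable {G : Subgroup (Perm I)} {O O' : Finset I} {x y : Perm I} {a : I}

lemma le_stabilizer (hO : IsOrbitOf G O) : G ≤ stabilizer (Perm I) (O : Set I) :=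
  fun g hg => Perm.mem_stabilizer_of_mapsTo fun a ha => (hO a ha _).2 ⟨g, hg, rfl⟩

lemma subset_of_le_stabilizer (hO : IsOrbitOf G O) {J : Set I}
    (hJ : G ≤ stabilizer (Perm I) J) (ha : a ∈ O) (haJ : a ∈ J) : (O : Set I) ⊆ J := by
  intro b hb
  obtain ⟨g, hg, rfl⟩ := (hO a ha b).1 hb
  exact (Perm.apply_mem_iff_of_mem_stabilizer (hJ hg) a).2 haJ

lemma apply_mem_iff_of_mem_centralizer (hO : IsOrbitOf G O) (hO' : IsOrbitOf G O')
    (hx : x ∈ Subgroup.centralizer (G : Set (Perm I))) (ha : a ∈ O) (hxa : x a ∈ O') (b : I) :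
    x b ∈ O' ↔ b ∈ O := by
  constructor
  · intro hb
    obtain ⟨g, hg, hgb⟩ := (hO' _ hxa _).1 hb
    rw [← Perm.apply_comm_of_mem_centralizer hx hg] at hgb
    exact (hO a ha b).2 ⟨g, hg, x.injective hgb⟩
  · intro hb
    obtain ⟨g, hg, rfl⟩ := (hO a ha b).1 hb
    exact (hO' _ hxa _).2 ⟨g, hg, (Perm.apply_comm_of_mem_centralizer hx hg a).symm⟩

lemma eqOn_of_mem_centralizer (hO : IsOrbitOf G O)
    (hx : x ∈ Subgroup.centralizer (G : Set (Perm I)))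
    (hy : y ∈ Subgroup.centralizer (G : Set (Perm I))) (ha : a ∈ O) (hxy : x a = y a) :
    Set.EqOn x y O := by
  intro b hb
  obtain ⟨g, hg, rfl⟩ := (hO a ha b).1 hb
  rw [Perm.apply_comm_of_mem_centralizer hx hg, Perm.apply_comm_of_mem_centralizer hy hg, hxy]

end IsOrbitOf

theorem card_centralizer_le [Fintype I] {ι : Type*} [Fintype ι] {G : Subgroup (Perm I)}
    {O : ι → Finset I} (hO : ∀ i, IsOrbitOf G (O i)) (hne : ∀ i, (O i).Nonempty)
    (hcover : ∀ a, ∃ i, a ∈ O i) :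
    Nat.card (Subgroup.centralizer (G : Set (Perm I))) ≤ Fintype.card I ^ Fintype.card ι := by
  choose p hp using hne
  have hinj : Injective fun x : Subgroup.centralizer (G : Set (Perm I)) => fun i => x.1 (p i) := by
    intro x y hxy
    ext b
    obtain ⟨i, hi⟩ := hcover b
    exact (hO i).eqOn_of_mem_centralizer x.2 y.2 (hp i) (congrFun hxy i) hi
  calc Nat.card _ ≤ Nat.card (ι → I) := Nat.card_le_card_of_injective _ hinj
    _ = Fintype.card I ^ Fintype.card ι := by
      rw [Nat.card_fun, Nat.card_eq_fintype_card, Nat.card_eq_fintype_card]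

theorem mem_stabilizer_of_mem_centralizer [Fintype I] [DecidableEq I] {ι : Type*}
    {G : Subgroup (Perm I)} {w : Perm I} (hwG : w ∈ G) {O : ι → Finset I}
    (hO : ∀ i, IsOrbitOf G (O i)) (hne : ∀ i, (O i).Nonempty) (hcover : ∀ a, ∃ i, a ∈ O i)
    {wp : ι → Perm I} (hwp₁ : ∀ i, ∀ a ∈ O i, wp i a = w a) (hwp₂ : ∀ i, ∀ a ∉ O i, wp i a = a)
    (hdistinct : ∀ i j, Perm.sign (wp i) = Perm.sign (wp j) → (O i).card = (O j).card → i = j)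
    {x : Perm I} (hx : x ∈ Subgroup.centralizer (G : Set (Perm I))) (i : ι) :
    x ∈ stabilizer (Perm I) (O i : Set I) := by
  obtain ⟨a, ha⟩ := hne i
  obtain ⟨j, hj⟩ := hcover (x a)
  have hxO := (hO i).apply_mem_iff_of_mem_centralizer (hO j) hx ha hj
  have hxw : Commute x w := (Subgroup.mem_centralizer_iff.mp hx w hwG).symm
  obtain rfl : i = j := hdistinct i j
    (Perm.sign_eq_of_apply_mem_iff hxw hxO (hwp₁ i) (hwp₂ i) (hwp₁ j) (hwp₂ j))
    (Perm.card_eq_of_apply_mem_iff hxO)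
  exact Perm.mem_stabilizer_of_mapsTo fun b hb => (hxO b).2 hb

section WO

variable [Fintype I] [DecidableEq I] {σ : Perm I}

lemma WO_le_stabilizer (O : Finset I) : WO σ O ≤ stabilizer (Perm I) (O : Set I) :=
  fun _ hy => Perm.fixingSubgroup_compl_le_stabilizer _ hy.2

lemma WO_le_fixingSubgroup {O O' : Finset I} (h : Disjoint O O') :
    WO σ O ≤ fixingSubgroup (Perm I) (O' : Set I) :=
  fun _ hy => fixingSubgroup_antitone (Perm I) I
    (Set.subset_compl_iff_disjoint_left.2 (Finset.disjoint_coe.2 h)) hy.2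

lemma WO_mono {O O' : Finset I} (h : O ⊆ O') : WO σ O ≤ WO σ O' :=
  inf_le_inf_left _ (fixingSubgroup_antitone (Perm I) I (Set.compl_subset_compl.2 h))

lemma iSup_WO_le_stabilizer {κ : Type*} {J : κ → Finset I} (hJ : Pairwise (Disjoint on J))
    (s : κ) : ⨆ t, WO σ (J t) ≤ stabilizer (Perm I) (J s : Set I) := by
  refine iSup_le fun t => ?_
  rcases eq_or_ne t s with rfl | hts
  · exact WO_le_stabilizer _
  · exact (WO_le_fixingSubgroup (hJ hts)).trans (fixingSubgroup_le_stabilizer _ _)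

end WO

section Centralizer

variable [Fintype I] [DecidableEq I] {σ w wp : Perm I} {O : Finset I}

lemma WO_inf_centralizer_le (hw : ∀ a, w a ∈ O ↔ a ∈ O) (hwp : ∀ a ∈ O, wp a = w a) :
    WO σ O ⊓ Subgroup.centralizer {wp} ≤
      Subgroup.centralizer {σ} ⊓ Subgroup.centralizer {w} :=
  fun _ hy => ⟨hy.1.1, Subgroup.mem_centralizer_singleton_iff.2 <|
    Perm.commute_of_mem_fixingSubgroup_compl hy.1.2 hw hwp
      (Subgroup.mem_centralizer_singleton_iff.1 hy.2)⟩

lemma restrict_mem_WO_inf_centralizer (hσ : ∀ a, σ a ∈ O ↔ a ∈ O) (hw : ∀ a, w a ∈ O ↔ a ∈ O)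
    (hwp₁ : ∀ a ∈ O, wp a = w a) (hwp₂ : ∀ a ∉ O, wp a = a) {x : Perm I}
    (hx : x ∈ Subgroup.centralizer {σ} ⊓ Subgroup.centralizer {w})
    (hxO : ∀ a, x a ∈ O ↔ a ∈ O) : Perm.restrict x O hxO ∈ WO σ O ⊓ Subgroup.centralizer {wp} := by
  have hwp : wp = Perm.restrict w O hw := Equiv.ext fun a => by
    by_cases ha : a ∈ O
    · rw [hwp₁ a ha, Perm.restrict_apply_of_mem ha]
    · rw [hwp₂ a ha, Perm.restrict_apply_of_notMem ha]
  have hxw : Commute (Perm.restrict x O hxO) w :=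
    Perm.commute_restrict_left (Subgroup.mem_centralizer_singleton_iff.1 hx.2) hw
  refine ⟨⟨Subgroup.mem_centralizer_singleton_iff.2
    (Perm.commute_restrict_left (Subgroup.mem_centralizer_singleton_iff.1 hx.1) hσ),
    (mem_fixingSubgroup_iff _).2 fun a ha => Perm.restrict_apply_of_notMem ha⟩, ?_⟩
  rw [hwp]
  exact Subgroup.mem_centralizer_singleton_iff.2
    (Perm.commute_restrict_left hxw.symm Perm.restrict_apply_mem_iff).symm

theorem inf_centralizer_eq_iSup {ι : Type*} [Fintype ι] {O : ι → Finset I}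
    (hdisj : Pairwise (Disjoint on O)) (hcover : ∀ a, ∃ i, a ∈ O i)
    (hσ : ∀ i, σ ∈ stabilizer (Perm I) (O i : Set I))
    (hw : ∀ i, w ∈ stabilizer (Perm I) (O i : Set I))
    {wp : ι → Perm I} (hwp₁ : ∀ i, ∀ a ∈ O i, wp i a = w a) (hwp₂ : ∀ i, ∀ a ∉ O i, wp i a = a)
    (hstab : ∀ x ∈ Subgroup.centralizer {σ} ⊓ Subgroup.centralizer {w}, ∀ i,
      x ∈ stabilizer (Perm I) (O i : Set I)) :
    Subgroup.centralizer {σ} ⊓ Subgroup.centralizer {w} =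
      ⨆ i, WO σ (O i) ⊓ Subgroup.centralizer {wp i} := by
  have hσO i := Perm.apply_mem_iff_of_mem_stabilizer (hσ i)
  have hwO i := Perm.apply_mem_iff_of_mem_stabilizer (hw i)
  refine le_antisymm (fun x hx => ?_) (iSup_le fun i => WO_inf_centralizer_le (hwO i) (hwp₁ i))
  have hxO i := Perm.apply_mem_iff_of_mem_stabilizer (hstab x hx i)
  exact Perm.mem_iSup_of_restrict_mem hdisj hcover hxO fun i =>
    restrict_mem_WO_inf_centralizer (hσO i) (hwO i) (hwp₁ i) (hwp₂ i) hx (hxO i)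

theorem iSup_WO_inf_centralizer_eq {ι κ : Type*} {O : ι → Finset I} {J : κ → Finset I}
    {H : ι → Subgroup (Perm I)} (hH : ∀ i, H i ≤ WO σ (O i)) (hOJ : ∀ i, ∃ s, O i ⊆ J s)
    (hC : Subgroup.centralizer {σ} ⊓ Subgroup.centralizer {w} = ⨆ i, H i) :
    (⨆ s, WO σ (J s)) ⊓ Subgroup.centralizer {w} =
      Subgroup.centralizer {σ} ⊓ Subgroup.centralizer {w} := by
  refine le_antisymm (inf_le_inf_right _ (iSup_le fun _ => inf_le_left)) (le_inf ?_ inf_le_right)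
  rw [hC]
  refine iSup_le fun i => ?_
  obtain ⟨s, hs⟩ := hOJ i
  exact (hH i).trans ((WO_mono hs).trans (le_iSup (fun s => WO σ (J s)) s))

end Centralizer

end

theorem cents_pairwise_distinct_general {I : Type*} [Fintype I] [DecidableEq I]
    (n : ℕ) (hcard : Fintype.card I = 2 * n)
    (σ : Equiv.Perm I)
    (w : Equiv.Perm I)
    (k : ℕ)
    (O : Fin k → Finset I)
    (hOne : ∀ i, (O i).Nonempty)
    (hOdisj : ∀ i j, i ≠ j → Disjoint (O i) (O j))
    (hOorb : ∀ i, ∀ a ∈ O i, ∀ b : I,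
      b ∈ O i ↔ ∃ g ∈ Subgroup.closure ({w, σ} : Set (Equiv.Perm I)), g a = b)
    (hOcover : ∀ a : I, ∃ i, a ∈ O i)
    (wp : Fin k → Equiv.Perm I)
    (hwp1 : ∀ i, ∀ a ∈ O i, wp i a = w a)
    (hwp2 : ∀ i, ∀ a ∉ O i, wp i a = a)
    (hdistinct : Function.Injective
      (fun i => ((Equiv.Perm.sign (wp i) : ℤ)) * (((O i).card : ℤ) / 2)))
    (m : ℕ) (J : Fin m → Finset I)
    (hJdisj : ∀ s t, s ≠ t → Disjoint (J s) (J t))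
    (hJcover : ∀ a : I, ∃ s, a ∈ J s)
    (hJsigma : ∀ s, ∀ a ∈ J s, σ a ∈ J s)
    (hwP : w ∈ ⨆ s, WO σ (J s)) :
    (Subgroup.centralizer ({σ} : Set (Equiv.Perm I)) ⊓
        Subgroup.centralizer ({w} : Set (Equiv.Perm I)) =
      ⨆ i : Fin k, (WO σ (O i) ⊓ Subgroup.centralizer ({wp i} : Set (Equiv.Perm I)))) ∧
    Nat.card ↥(Subgroup.centralizer ({σ} : Set (Equiv.Perm I)) ⊓
        Subgroup.centralizer ({w} : Set (Equiv.Perm I))) ≤ 2 ^ k * n ^ k ∧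
    ((⨆ s, WO σ (J s)) ⊓ Subgroup.centralizer ({w} : Set (Equiv.Perm I)) =
      Subgroup.centralizer ({σ} : Set (Equiv.Perm I)) ⊓
        Subgroup.centralizer ({w} : Set (Equiv.Perm I))) := by
  set G := Subgroup.closure ({w, σ} : Set (Perm I))
  have hC : Subgroup.centralizer {σ} ⊓ Subgroup.centralizer {w} =
      Subgroup.centralizer (G : Set (Perm I)) := by
    rw [Subgroup.centralizer_closure, Subgroup.centralizer_eq_iInf {w, σ}, iInf_insert,
      iInf_singleton, inf_comm]
  have hO : ∀ i, IsOrbitOf G (O i) := hOorb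
  have hwG : w ∈ G := Subgroup.subset_closure (by simp)
  have hσG : σ ∈ G := Subgroup.subset_closure (by simp)
  have hstab : ∀ x ∈ Subgroup.centralizer {σ} ⊓ Subgroup.centralizer {w}, ∀ i,
      x ∈ stabilizer (Perm I) (O i : Set I) := fun x hx =>
    mem_stabilizer_of_mem_centralizer hwG hO hOne hOcover hwp1 hwp2
      (fun i j hs hc => hdistinct (by simp only [hs, hc])) (hC ▸ hx)
  have part1 := inf_centralizer_eq_iSup hOdisj hOcover (fun i => (hO i).le_stabilizer hσG)
    (fun i => (hO i).le_stabilizer hwG) hwp1 hwp2 hstab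
  refine ⟨part1, ?_, ?_⟩
  · calc Nat.card (Subgroup.centralizer {σ} ⊓ Subgroup.centralizer {w} : Subgroup (Perm I))
        ≤ Fintype.card I ^ Fintype.card (Fin k) := hC ▸ card_centralizer_le hO hOne hOcover
      _ = 2 ^ k * n ^ k := by rw [hcard, Fintype.card_fin, mul_pow]
  · have hGJ s : G ≤ stabilizer (Perm I) (J s : Set I) :=
      (Subgroup.closure_le _).2 <| Set.insert_subset (iSup_WO_le_stabilizer hJdisj s hwP) <|
        Set.singleton_subset_iff.2 (Perm.mem_stabilizer_of_mapsTo (hJsigma s))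
    refine iSup_WO_inf_centralizer_eq (fun i => inf_le_left) (fun i => ?_) part1
    obtain ⟨a, ha⟩ := hOne i
    obtain ⟨s, hs⟩ := hJcover a
    exact ⟨s, Finset.coe_subset.1 ((hO i).subset_of_le_stabilizer (hGJ s) ha hs)⟩

/-- Centralizers of elements of `W_I` with pairwise distinct cycles:
(i) the centralizer is the product of the centralizers of the cycles;
(ii) it has order at most `2^k · n^k`;
(iii) it is contained in any subgroup `P = W_{I_1} ⋯ W_{I_m}` containing `w`, so
`C_P(w) = C_{W_I}(w)`. -/
theorem cents_pairwise_distinct {I : Type*} [Fintype I] [DecidableEq I]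
    (n : ℕ) (hn : 1 ≤ n) (hcard : Fintype.card I = 2 * n)
    (σ : Equiv.Perm I) (hinv : σ * σ = 1) (hfpf : ∀ a : I, σ a ≠ a)
    (w : Equiv.Perm I) (hw : w ∈ Subgroup.centralizer ({σ} : Set (Equiv.Perm I)))
    (k : ℕ) (hk : 1 ≤ k)
    (O : Fin k → Finset I)
    (hOne : ∀ i, (O i).Nonempty)
    (hOdisj : ∀ i j, i ≠ j → Disjoint (O i) (O j))
    (hOorb : ∀ i, ∀ a ∈ O i, ∀ b : I,
      b ∈ O i ↔ ∃ g ∈ Subgroup.closure ({w, σ} : Set (Equiv.Perm I)), g a = b)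
    (hOcover : ∀ a : I, ∃ i, a ∈ O i)
    (wp : Fin k → Equiv.Perm I)
    (hwp1 : ∀ i, ∀ a ∈ O i, wp i a = w a)
    (hwp2 : ∀ i, ∀ a ∉ O i, wp i a = a)
    (hdistinct : Function.Injective
      (fun i => ((Equiv.Perm.sign (wp i) : ℤ)) * (((O i).card : ℤ) / 2)))
    (m : ℕ) (J : Fin m → Finset I)
    (hJdisj : ∀ s t, s ≠ t → Disjoint (J s) (J t))
    (hJcover : ∀ a : I, ∃ s, a ∈ J s)
    (hJsigma : ∀ s, ∀ a ∈ J s, σ a ∈ J s)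
    (hwP : w ∈ ⨆ s, WO σ (J s)) :
    (Subgroup.centralizer ({σ} : Set (Equiv.Perm I)) ⊓
        Subgroup.centralizer ({w} : Set (Equiv.Perm I)) =
      ⨆ i : Fin k, (WO σ (O i) ⊓ Subgroup.centralizer ({wp i} : Set (Equiv.Perm I)))) ∧
    Nat.card ↥(Subgroup.centralizer ({σ} : Set (Equiv.Perm I)) ⊓
        Subgroup.centralizer ({w} : Set (Equiv.Perm I))) ≤ 2 ^ k * n ^ k ∧
    ((⨆ s, WO σ (J s)) ⊓ Subgroup.centralizer ({w} : Set (Equiv.Perm I)) =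
      Subgroup.centralizer ({σ} : Set (Equiv.Perm I)) ⊓
        Subgroup.centralizer ({w} : Set (Equiv.Perm I))) :=
  cents_pairwise_distinct_general n hcard σ w k O hOne hOdisj hOorb hOcover wp hwp1 hwp2 hdistinct m
    J hJdisj hJcover hJsigma hwP
end

section
/- Let p be an odd prime, let q ≥ 2 be a prime power, and set M := (q^p − 1)/(q − 1). Then for all nonnegative integers a, b and every positive integer c with c ≡ q^a + q^b (mod M), one has gcd(c·(q−1), q^p − 1) = q − 1. -/
/-- For an odd prime `p` and a prime power `q ≥ 2`, with `M = (q^p - 1)/(q - 1)`: for all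
`a, b ≥ 0` and `c > 0` with `c ≡ q^a + q^b (mod M)`, one has
`gcd(c(q-1), q^p - 1) = q - 1`. -/
theorem gcd_eq_q_sub_one (p q : ℕ) (hp : p.Prime) (hodd : Odd p)
    (hq : IsPrimePow q) (hq2 : 2 ≤ q)
    (a b c : ℕ) (hc : 0 < c)
    (hmod : c ≡ q ^ a + q ^ b [MOD (q ^ p - 1) / (q - 1)]) :
    Nat.gcd (c * (q - 1)) (q ^ p - 1) = q - 1 := by
  set M := (q ^ p - 1) / (q - 1) with hM
  have h1q : 1 ≤ q := by omega
  have hqp1 : 1 ≤ q ^ p := Nat.one_le_pow _ _ (by omega)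
  have hkey : (∑ i ∈ Finset.range p, q ^ i) * (q - 1) = q ^ p - 1 := by
    zify [h1q, hqp1]
    push_cast
    exact geom_sum_mul _ _
  have hMS : M = ∑ i ∈ Finset.range p, q ^ i := by
    rw [hM, ← hkey, Nat.mul_div_cancel _ (by omega : 0 < q - 1)]
  have hMdvd : M * (q - 1) = q ^ p - 1 := by rw [hMS, hkey]
  have hModd : ¬ 2 ∣ M := by
    have hM2 : M % 2 = 1 := by
      rcases Nat.even_or_odd q with he | ho
      · have hop : Odd (q ^ p - 1) :=
          Nat.Even.sub_odd hqp1 (Nat.even_pow.mpr ⟨he, hp.ne_zero⟩) odd_one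
        have hMd : M ∣ q ^ p - 1 := ⟨q - 1, hMdvd.symm⟩
        by_contra h
        have h2M : 2 ∣ M := by omega
        have : 2 ∣ q ^ p - 1 := h2M.trans hMd
        rw [Nat.odd_iff] at hop
        omega
      · have hpow : ∀ i, q ^ i % 2 = 1 := fun i => Nat.odd_iff.mp (ho.pow)
        rw [hMS, Finset.sum_nat_mod]
        simp only [hpow]
        simp [Nat.odd_iff.mp hodd]
    omega
  have hcop : ∀ a b : ℕ, a ≤ b → Nat.gcd (q ^ a + q ^ b) M = 1 := by
    intro a b hab
    by_contra h
    obtain ⟨r, hr, hrdvd⟩ := Nat.exists_prime_and_dvd h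
    have hrM : r ∣ M := hrdvd.trans (Nat.gcd_dvd_right _ _)
    have hrab : r ∣ q ^ a + q ^ b := hrdvd.trans (Nat.gcd_dvd_left _ _)
    have hrq : r ∣ q ^ p - 1 := hrM.trans ⟨q - 1, hMdvd.symm⟩
    haveI : Fact r.Prime := ⟨hr⟩
    have hqp : (q : ZMod r) ^ p = 1 := by
      have h0 : ((q ^ p - 1 : ℕ) : ZMod r) = 0 :=
        (ZMod.natCast_eq_zero_iff _ _).mpr hrq
      rw [Nat.cast_sub hqp1] at h0
      push_cast at h0
      linear_combination h0
    have hqne : (q : ZMod r) ≠ 0 := by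
      intro h0
      rw [h0, zero_pow hp.ne_zero] at hqp
      exact zero_ne_one hqp
    have hsum : (q : ZMod r) ^ a + (q : ZMod r) ^ b = 0 := by
      have h0 : ((q ^ a + q ^ b : ℕ) : ZMod r) = 0 :=
        (ZMod.natCast_eq_zero_iff _ _).mpr hrab
      push_cast at h0
      exact h0
    have hd : (q : ZMod r) ^ (b - a) = -1 := by
      have hb : (q : ZMod r) ^ b = (q : ZMod r) ^ a * (q : ZMod r) ^ (b - a) := by
        rw [← pow_add]; congr 1; omega
      rw [hb] at hsum
      have hfac : (q : ZMod r) ^ a * (1 + (q : ZMod r) ^ (b - a)) = 0 := by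
        linear_combination hsum
      have hpa : (q : ZMod r) ^ a ≠ 0 := pow_ne_zero _ hqne
      rcases mul_eq_zero.mp hfac with h' | h'
      · exact absurd h' hpa
      · linear_combination h'
    have hone : (q : ZMod r) ^ (b - a) = 1 := by
      rcases hp.eq_one_or_self_of_dvd (orderOf (q : ZMod r))
          (orderOf_dvd_of_pow_eq_one hqp) with h1 | hpo
      · have hq1 : (q : ZMod r) = 1 := orderOf_eq_one_iff.mp h1
        simp [hq1]
      · have h2d : (q : ZMod r) ^ (2 * (b - a)) = 1 := by
          rw [mul_comm, pow_mul, hd]; norm_num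
        have hdvd2 : p ∣ 2 * (b - a) := by
          rw [← hpo]; exact orderOf_dvd_of_pow_eq_one h2d
        have hcop2 : Nat.Coprime p 2 := by
          rw [hp.coprime_iff_not_dvd]
          intro hd2
          have := (Nat.prime_dvd_prime_iff_eq hp Nat.prime_two).mp hd2
          rw [this, Nat.odd_iff] at hodd
          omega
        obtain ⟨k, hk⟩ := hcop2.dvd_of_dvd_mul_left hdvd2
        rw [hk, pow_mul, hqp, one_pow]
    rw [hone] at hd
    have h2 : ((2 : ℕ) : ZMod r) = 0 := by push_cast; linear_combination hd
    have hr2 : r = 2 :=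
      (Nat.prime_dvd_prime_iff_eq hr Nat.prime_two).mp
        ((ZMod.natCast_eq_zero_iff _ _).mp h2)
    exact hModd (hr2 ▸ hrM)
  have hgcd : Nat.gcd c M = 1 := by
    rw [Nat.gcd_comm, Nat.gcd_rec]
    rw [Nat.ModEq] at hmod
    rw [hmod, ← Nat.gcd_rec, Nat.gcd_comm]
    rcases le_total a b with h | h
    · exact hcop a b h
    · rw [add_comm]; exact hcop b a h
  calc Nat.gcd (c * (q - 1)) (q ^ p - 1)
      = Nat.gcd (c * (q - 1)) (M * (q - 1)) := by rw [hMdvd]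
    _ = Nat.gcd c M * (q - 1) := Nat.gcd_mul_right _ _ _
    _ = q - 1 := by rw [hgcd, one_mul]
end

section
/- Let N and N' be positive integers, let λ, μ be partitions of N and λ', μ' partitions of N' (parts listed in weakly decreasing order) such that μ_1 ≥ N/2 and μ'_1 ≥ N'/2, and such that λ_i = λ'_i and μ_i = μ'_i for all i ≥ 2 (i.e., λ and λ' have the same partition after removing their largest part, and likewise μ and μ'). Then the Kostka numbers satisfy K_{λμ} = K_{λ'μ'}. -/
/-- `p` is a partition of `N`, with parts `p 0 ≥ p 1 ≥ ⋯` (indexed from `0`, so the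
largest part is `p 0`), all parts beyond index `N` being zero. -/
def IsPartitionOf (N : ℕ) (p : ℕ → ℕ) : Prop :=
  Antitone p ∧ (∑ i ∈ Finset.range N, p i) = N ∧ ∀ i, N ≤ i → p i = 0

/-- `T` is a semistandard Young tableau of shape `p` and weight `w`, where `p` and `w`
are partitions of `N`: entries are positive integers inside the diagram of `p`
(and `0` outside), rows are weakly increasing, columns are strictly increasing, and the
value `v ≥ 1` occurs exactly `w (v-1)` times (`w (v-1)` is the `v`-th part `w_v`). -/
def IsSSYTOfWeight (N : ℕ) (p w : ℕ → ℕ) (T : ℕ → ℕ → ℕ) : Prop :=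
  (∀ i j, p i ≤ j → T i j = 0) ∧
  (∀ i j, j < p i → 1 ≤ T i j) ∧
  (∀ i j j', j ≤ j' → j' < p i → T i j ≤ T i j') ∧
  (∀ i i' j, i < i' → j < p i' → T i j < T i' j) ∧
  (∀ v, 1 ≤ v →
    (((Finset.range N) ×ˢ (Finset.range N)).filter
      (fun c => c.2 < p c.1 ∧ T c.1 c.2 = v)).card = w (v - 1))

/-- The Kostka number `K_{p,w}`: the number of semistandard Young tableaux of shape `p`
and weight `w`. -/
noncomputable def kostka (N : ℕ) (p w : ℕ → ℕ) : ℕ :=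
  Nat.card {T : ℕ → ℕ → ℕ // IsSSYTOfWeight N p w T}

/-!
In a semistandard tableau of weight `μ` the `1`s fill exactly the first `μ₁` cells of the first
row. As `2 λ₂ ≤ N ≤ 2 μ₁`, every cell of the second row lies below a `1`, so once the `1`s are
erased the rest of the first row is no longer tied columnwise to the lower rows: what remains is
a "reduced" tableau of shape `(λ₁ - μ₁, λ₂, λ₃, …)` and weight `(μ₂, μ₃, …)`, and erasing and
prepending the `1`s are inverse bijections. Both partitions lose the same amount when their first
parts are removed, so `λ₁ - μ₁ = λ'₁ - μ'₁` and both Kostka numbers count the same reduced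
tableaux. If `μ₁ > λ₁` both sides are `0`.
-/

open Finset

lemma IsPartitionOf.sum_range_of_le {N K : ℕ} {p : ℕ → ℕ} (hp : IsPartitionOf N p)
    (hK : N ≤ K) : ∑ i ∈ range K, p i = N := by
  rw [← hp.2.1]
  exact (sum_subset (range_subset_range.mpr hK) fun i _ hi => hp.2.2 i (by simpa using hi)).symm

lemma IsPartitionOf.apply_le {N : ℕ} {p : ℕ → ℕ} (hp : IsPartitionOf N p) (i : ℕ) :
    p i ≤ N :=
  calc p i ≤ ∑ k ∈ range (N + i + 1), p k :=
        single_le_sum (fun _ _ => Nat.zero_le _) (mem_range.mpr (by omega))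
    _ = N := hp.sum_range_of_le (by omega)

lemma IsPartitionOf.apply_zero_add_sum_Ico {N K : ℕ} {p : ℕ → ℕ} (hp : IsPartitionOf N p)
    (hK : N < K) : p 0 + ∑ i ∈ Ico 1 K, p i = N := by
  rw [← sum_range_eq_add_Ico p (by omega), hp.sum_range_of_le hK.le]

lemma IsPartitionOf.two_mul_apply_one_le {N : ℕ} {p : ℕ → ℕ} (hp : IsPartitionOf N p) :
    2 * p 1 ≤ N := by
  have h1 : p 1 ≤ ∑ i ∈ Ico 1 (N + 2), p i :=
    single_le_sum (fun _ _ => Nat.zero_le _) (mem_Ico.mpr ⟨le_rfl, by omega⟩)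
  have h0 : p 1 ≤ p 0 := hp.1 zero_le_one
  have := hp.apply_zero_add_sum_Ico (K := N + 2) (by omega)
  omega

lemma IsPartitionOf.sub_apply_zero_eq {N N' : ℕ} {p p' : ℕ → ℕ} (hp : IsPartitionOf N p)
    (hp' : IsPartitionOf N' p') (htail : ∀ i, 1 ≤ i → p i = p' i) :
    (N : ℤ) - p 0 = N' - p' 0 := by
  have hsum : ∑ i ∈ Ico 1 (N + N' + 1), p i = ∑ i ∈ Ico 1 (N + N' + 1), p' i :=
    sum_congr rfl fun i hi => htail i (mem_Ico.mp hi).1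
  have := hp.apply_zero_add_sum_Ico (K := N + N' + 1) (by omega)
  have := hp'.apply_zero_add_sum_Ico (K := N + N' + 1) (by omega)
  omega

def cellsWithValue (p : ℕ → ℕ) (T : ℕ → ℕ → ℕ) (v : ℕ) : Set (ℕ × ℕ) :=
  {c | c.2 < p c.1 ∧ T c.1 c.2 = v}

lemma IsPartitionOf.card_filter_eq_ncard_cellsWithValue {N : ℕ} {p : ℕ → ℕ}
    (hp : IsPartitionOf N p) (T : ℕ → ℕ → ℕ) (v : ℕ) :
    ((range N ×ˢ range N).filter (fun c => c.2 < p c.1 ∧ T c.1 c.2 = v)).card =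
      (cellsWithValue p T v).ncard := by
  rw [← Set.ncard_coe_finset]
  congr 1
  ext ⟨i, j⟩
  simp only [cellsWithValue, coe_filter, mem_product, mem_range, Set.mem_ofPred_eq]
  refine ⟨fun h => h.2, fun h => ⟨⟨?_, h.1.trans_le (hp.apply_le i)⟩, h⟩⟩
  by_contra hi
  have := hp.2.2 i (not_lt.mp hi)
  omega

lemma IsSSYTOfWeight.ncard_cellsWithValue {N : ℕ} {p w : ℕ → ℕ} {T : ℕ → ℕ → ℕ}
    (hp : IsPartitionOf N p) (hT : IsSSYTOfWeight N p w T) {v : ℕ} (hv : 1 ≤ v) :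
    (cellsWithValue p T v).ncard = w (v - 1) := by
  rw [← hp.card_filter_eq_ncard_cellsWithValue, hT.2.2.2.2 v hv]

lemma IsSSYTOfWeight.lt_apply {N : ℕ} {p w : ℕ → ℕ} {T : ℕ → ℕ → ℕ} (hp : Antitone p)
    (hT : IsSSYTOfWeight N p w T) (i : ℕ) : ∀ j, j < p i → i < T i j := by
  induction i with
  | zero => exact hT.2.1 0
  | succ i ih =>
    intro j hj
    have := ih j (hj.trans_le (hp i.le_succ))
    have := hT.2.2.2.1 i (i + 1) j i.lt_succ_self hj
    omega

lemma IsSSYTOfWeight.cellsWithValue_one {N : ℕ} {l m : ℕ → ℕ} {T : ℕ → ℕ → ℕ}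
    (hl : IsPartitionOf N l) (hT : IsSSYTOfWeight N l m T) :
    cellsWithValue l T 1 = {0} ×ˢ Set.Iio (m 0) := by
  set S : Set ℕ := {j | j < l 0 ∧ T 0 j = 1}
  have hcells : cellsWithValue l T 1 = {0} ×ˢ S := by
    ext ⟨i, j⟩
    simp only [cellsWithValue, S, Set.mem_ofPred_eq, Set.mem_prod, Set.mem_singleton_iff]
    constructor
    · rintro ⟨hj, hv⟩
      have := hT.lt_apply hl.1 i j hj
      obtain rfl : i = 0 := by omega
      exact ⟨rfl, hj, hv⟩
    · rintro ⟨rfl, hS⟩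
      exact hS
  have hS : IsLowerSet S := fun j' j hjj' ⟨hj', hv⟩ => by
    have := hT.2.2.1 0 j j' hjj' hj'
    have := hT.2.1 0 j (hjj'.trans_lt hj')
    exact ⟨hjj'.trans_lt hj', by omega⟩
  obtain hS | ⟨a, hSa⟩ := hS.eq_univ_or_Iio
  · exact absurd (hS ▸ Set.mem_univ (l 0) : l 0 ∈ S).1 (lt_irrefl _)
  · have hcard := hT.ncard_cellsWithValue hl le_rfl
    rw [hcells, Set.ncard_prod, hSa, Set.ncard_singleton, one_mul, Set.ncard_Iio_nat] at hcard
    rw [hcells, hSa, hcard]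

lemma IsSSYTOfWeight.mem_cellsWithValue_one {N : ℕ} {l m : ℕ → ℕ} {T : ℕ → ℕ → ℕ}
    (hl : IsPartitionOf N l) (hT : IsSSYTOfWeight N l m T) {j : ℕ} (hj : j < m 0) :
    ((0 : ℕ), j) ∈ cellsWithValue l T 1 := by
  rw [hT.cellsWithValue_one hl]
  exact ⟨rfl, hj⟩

lemma IsSSYTOfWeight.apply_zero_le {N : ℕ} {l m : ℕ → ℕ} {T : ℕ → ℕ → ℕ}
    (hl : IsPartitionOf N l) (hT : IsSSYTOfWeight N l m T) : m 0 ≤ l 0 := by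
  rcases Nat.eq_zero_or_pos (m 0) with h | h
  · omega
  · exact Nat.le_of_pred_lt (hT.mem_cellsWithValue_one hl (Nat.sub_lt h one_pos)).1

def eraseOnes (s : ℕ) (T : ℕ → ℕ → ℕ) : ℕ → ℕ → ℕ :=
  fun i j => if i = 0 then T 0 (j + s) else T i j

def prependOnes (s : ℕ) (R : ℕ → ℕ → ℕ) : ℕ → ℕ → ℕ :=
  fun i j => if i = 0 then (if j < s then 1 else R 0 (j - s)) else R i j

def shrinkRowZero (s : ℕ) (p : ℕ → ℕ) : ℕ → ℕ :=
  fun i => if i = 0 then p 0 - s else p i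

lemma eraseOnes_prependOnes (s : ℕ) (R : ℕ → ℕ → ℕ) : eraseOnes s (prependOnes s R) = R := by
  funext i j
  rcases Nat.eq_zero_or_pos i with rfl | hi
  · simp [eraseOnes, prependOnes]
  · simp [eraseOnes, prependOnes, hi.ne']

lemma prependOnes_eraseOnes {s : ℕ} {T : ℕ → ℕ → ℕ} (hT : ∀ j < s, T 0 j = 1) :
    prependOnes s (eraseOnes s T) = T := by
  funext i j
  rcases Nat.eq_zero_or_pos i with rfl | hi
  · by_cases hj : j < s
    · simp [prependOnes, hj, hT j hj]
    · simp [prependOnes, eraseOnes, hj, Nat.sub_add_cancel (not_lt.mp hj)]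
  · simp [eraseOnes, prependOnes, hi.ne']

lemma ncard_cellsWithValue_prependOnes {v : ℕ} (hv : v ≠ 1) (s : ℕ) (p : ℕ → ℕ)
    (R : ℕ → ℕ → ℕ) :
    (cellsWithValue p (prependOnes s R) v).ncard =
      (cellsWithValue (shrinkRowZero s p) R v).ncard := by
  set shift : ℕ × ℕ → ℕ × ℕ := fun c => (c.1, if c.1 = 0 then c.2 + s else c.2)
  have hshift : Function.Injective shift := by
    rintro ⟨i, j⟩ ⟨i', j'⟩ h
    simp only [shift, Prod.mk.injEq] at h
    obtain ⟨rfl, h⟩ := h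
    split_ifs at h <;> simp_all
  rw [← Set.ncard_image_of_injective (cellsWithValue (shrinkRowZero s p) R v) hshift]
  congr 1
  ext ⟨i, j⟩
  simp only [cellsWithValue, prependOnes, shrinkRowZero, shift, Set.mem_image,
    Set.mem_ofPred_eq, Prod.exists, Prod.mk.injEq]
  constructor
  · rintro ⟨hj, hval⟩
    by_cases hi : i = 0
    · subst hi
      rw [if_pos rfl] at hval
      have hsj : s ≤ j := by
        by_contra h
        rw [if_pos (not_le.mp h)] at hval
        exact hv hval.symm
      rw [if_neg (not_lt.mpr hsj)] at hval
      exact ⟨0, j - s, ⟨by simp only [if_true]; omega, hval⟩, rfl, by simp only [if_true]; omega⟩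
    · exact ⟨i, j, by simp_all, rfl, by simp [hi]⟩
  · rintro ⟨i, j, ⟨hj, hval⟩, rfl, rfl⟩
    by_cases hi : i = 0
    · subst hi
      simp_all
      omega
    · simp_all

/-- A semistandard tableau with its `1`s erased: row `0` holds what lies to the right of the
`1`s in the first row, so it is not compared columnwise with row `1`. -/
def IsReducedSSYT (q w : ℕ → ℕ) (R : ℕ → ℕ → ℕ) : Prop :=
  (∀ i j, q i ≤ j → R i j = 0) ∧
  (∀ i j, j < q i → 2 ≤ R i j) ∧
  (∀ i j j', j ≤ j' → j' < q i → R i j ≤ R i j') ∧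
  (∀ i i' j, 0 < i → i < i' → j < q i' → R i j < R i' j) ∧
  (∀ v, 2 ≤ v → (cellsWithValue q R v).ncard = w (v - 1))

lemma isReducedSSYT_congr_weight {w w' : ℕ → ℕ} (hw : ∀ i, 1 ≤ i → w i = w' i) (q : ℕ → ℕ) :
    IsReducedSSYT q w = IsReducedSSYT q w' := by
  funext R
  have : ∀ v, 2 ≤ v → w (v - 1) = w' (v - 1) := fun v hv => hw (v - 1) (by omega)
  simp +contextual only [IsReducedSSYT, this]

lemma IsSSYTOfWeight.isReducedSSYT_eraseOnes {N : ℕ} {l m : ℕ → ℕ} {T : ℕ → ℕ → ℕ}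
    (hl : IsPartitionOf N l) (hT : IsSSYTOfWeight N l m T) :
    IsReducedSSYT (shrinkRowZero (m 0) l) m (eraseOnes (m 0) T) := by
  have hone : ∀ i j, j < l i → (T i j = 1 ↔ i = 0 ∧ j < m 0) := fun i j hj => by
    simpa [cellsWithValue, hj] using Set.ext_iff.mp (hT.cellsWithValue_one hl) (i, j)
  have hweight := fun v (hv : 1 ≤ v) => hT.ncard_cellsWithValue hl hv
  obtain ⟨hzero, hpos, hrow, hcol, -⟩ := id hT
  refine ⟨fun i j hj => ?_, fun i j hj => ?_, fun i j j' hjj' hj' => ?_,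
    fun i i' j hi hii' hj => ?_, fun v hv => ?_⟩
  · by_cases hi : i = 0
    · subst hi; simp only [shrinkRowZero, eraseOnes, if_true] at hj ⊢
      exact hzero 0 _ (by omega)
    · simp only [shrinkRowZero, eraseOnes, hi, if_false] at hj ⊢
      exact hzero i j hj
  · by_cases hi : i = 0
    · subst hi; simp only [shrinkRowZero, eraseOnes, if_true] at hj ⊢
      have := hone 0 (j + m 0) (by omega)
      have := hpos 0 (j + m 0) (by omega)
      omega
    · simp only [shrinkRowZero, eraseOnes, hi, if_false] at hj ⊢
      have := hone i j hj
      have := hpos i j hj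
      omega
  · by_cases hi : i = 0
    · subst hi; simp only [shrinkRowZero, eraseOnes, if_true] at hj' ⊢
      exact hrow 0 _ _ (by omega) (by omega)
    · simp only [shrinkRowZero, eraseOnes, hi, if_false] at hj' ⊢
      exact hrow i j j' hjj' hj'
  · simp only [shrinkRowZero, eraseOnes, hi.ne', (hi.trans hii').ne', if_false] at hj ⊢
    exact hcol i i' j hii' hj
  · rw [← ncard_cellsWithValue_prependOnes (by omega), prependOnes_eraseOnes]
    · exact hweight v (by omega)
    · exact fun j hj => (hT.mem_cellsWithValue_one hl hj).2

lemma IsReducedSSYT.isSSYTOfWeight_prependOnes {N : ℕ} {l m : ℕ → ℕ} {R : ℕ → ℕ → ℕ}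
    (hl : IsPartitionOf N l) (h1 : l 1 ≤ m 0) (h0 : m 0 ≤ l 0)
    (hR : IsReducedSSYT (shrinkRowZero (m 0) l) m R) :
    IsSSYTOfWeight N l m (prependOnes (m 0) R) := by
  obtain ⟨hzero, htwo, hrow, hcol, hweight⟩ := hR
  simp only [shrinkRowZero] at hzero htwo hrow hcol
  have hcells_one : cellsWithValue l (prependOnes (m 0) R) 1 = {0} ×ˢ Set.Iio (m 0) := by
    ext ⟨i, j⟩
    by_cases hi : i = 0
    · subst hi
      have := htwo 0 (j - m 0)
      simp only [cellsWithValue, prependOnes, Set.mem_ofPred_eq, Set.mem_prod,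
        Set.mem_singleton_iff, Set.mem_Iio, if_true, true_and] at this ⊢
      split_ifs <;> omega
    · have := htwo i j
      simp only [cellsWithValue, prependOnes, Set.mem_ofPred_eq, Set.mem_prod,
        Set.mem_singleton_iff, hi, if_false, false_and, iff_false] at this ⊢
      omega
  refine ⟨fun i j hj => ?_, fun i j hj => ?_, fun i j j' hjj' hj' => ?_,
    fun i i' j hii' hj => ?_, fun v hv => ?_⟩
  · by_cases hi : i = 0
    · subst hi
      have := hzero 0 (j - m 0)
      simp only [prependOnes, if_true] at this ⊢
      split_ifs at this ⊢ <;> omega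
    · simpa [prependOnes, hi] using hzero i j (by simpa [hi] using hj)
  · by_cases hi : i = 0
    · subst hi
      have := htwo 0 (j - m 0)
      simp only [prependOnes, if_true] at this ⊢
      split_ifs at this ⊢ <;> omega
    · have := htwo i j
      simp only [prependOnes, hi, if_false] at this ⊢
      omega
  · by_cases hi : i = 0
    · subst hi
      have := hrow 0 (j - m 0) (j' - m 0)
      have := htwo 0 (j' - m 0)
      simp only [prependOnes, if_true] at this ⊢
      split_ifs at * <;> omega
    · have := hrow i j j' hjj'
      simp only [prependOnes, hi, if_false] at this ⊢
      omega
  · have hi' : i' ≠ 0 := by omega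
    have hbelow := htwo i' j
    simp only [hi', if_false] at hbelow
    by_cases hi : i = 0
    · subst hi
      have := hl.1 (show 1 ≤ i' by omega)
      simp only [prependOnes, hi', if_true, if_false]
      split_ifs <;> omega
    · have := hcol i i' j (by omega) hii'
      simp only [prependOnes, hi, hi', if_false] at this ⊢
      omega
  · rw [hl.card_filter_eq_ncard_cellsWithValue]
    rcases hv.eq_or_lt with rfl | hv
    · rw [hcells_one, Set.ncard_prod, Set.ncard_singleton, one_mul, Set.ncard_Iio_nat]
    · rw [ncard_cellsWithValue_prependOnes (by omega), hweight v hv]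

lemma kostka_eq_card_isReducedSSYT {N : ℕ} {l m : ℕ → ℕ} (hl : IsPartitionOf N l)
    (h1 : l 1 ≤ m 0) (h0 : m 0 ≤ l 0) :
    kostka N l m = Nat.card {R // IsReducedSSYT (shrinkRowZero (m 0) l) m R} :=
  Nat.card_congr
    { toFun := fun T => ⟨eraseOnes (m 0) T, T.2.isReducedSSYT_eraseOnes hl⟩
      invFun := fun R => ⟨prependOnes (m 0) R, R.2.isSSYTOfWeight_prependOnes hl h1 h0⟩
      left_inv := fun T => Subtype.ext
        (prependOnes_eraseOnes fun _ hj => (T.2.mem_cellsWithValue_one hl hj).2)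
      right_inv := fun _ => Subtype.ext (eraseOnes_prependOnes _ _) }

lemma kostka_eq_zero_of_lt {N : ℕ} {l m : ℕ → ℕ} (hl : IsPartitionOf N l) (h : l 0 < m 0) :
    kostka N l m = 0 :=
  have : IsEmpty {T // IsSSYTOfWeight N l m T} :=
    ⟨fun T => absurd (T.2.apply_zero_le hl) (not_le.mpr h)⟩
  Nat.card_of_isEmpty

theorem kostka_stable_general (N N' : ℕ)
    (l m l' m' : ℕ → ℕ)
    (hl : IsPartitionOf N l) (hm : IsPartitionOf N m)
    (hl' : IsPartitionOf N' l') (hm' : IsPartitionOf N' m')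
    (hm1 : N ≤ 2 * m 0) (hm1' : N' ≤ 2 * m' 0)
    (htail_l : ∀ i, 1 ≤ i → l i = l' i) (htail_m : ∀ i, 1 ≤ i → m i = m' i) :
    kostka N l m = kostka N' l' m' := by
  have hl_head := hl.sub_apply_zero_eq hl' htail_l
  have hm_head := hm.sub_apply_zero_eq hm' htail_m
  by_cases h : m 0 ≤ l 0
  · have h' : m' 0 ≤ l' 0 := by omega
    have hshape : shrinkRowZero (m 0) l = shrinkRowZero (m' 0) l' := by
      funext i
      by_cases hi : i = 0
      · simp only [shrinkRowZero, hi, if_true]; omega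
      · simp only [shrinkRowZero, hi, if_false]; exact htail_l i (by omega)
    have := hl.two_mul_apply_one_le
    have := hl'.two_mul_apply_one_le
    rw [kostka_eq_card_isReducedSSYT hl (by omega) h,
      kostka_eq_card_isReducedSSYT hl' (by omega) h', hshape,
      isReducedSSYT_congr_weight htail_m]
  · rw [kostka_eq_zero_of_lt hl (by omega), kostka_eq_zero_of_lt hl' (by omega)]

/-- Stability of Kostka numbers: if `μ₁ ≥ N/2` and `μ'₁ ≥ N'/2`, and `λ, λ'` (resp.
`μ, μ'`) agree after removing their largest parts, then `K_{λμ} = K_{λ'μ'}`. -/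
theorem kostka_stable (N N' : ℕ) (hN : 0 < N) (hN' : 0 < N')
    (l m l' m' : ℕ → ℕ)
    (hl : IsPartitionOf N l) (hm : IsPartitionOf N m)
    (hl' : IsPartitionOf N' l') (hm' : IsPartitionOf N' m')
    (hm1 : N ≤ 2 * m 0) (hm1' : N' ≤ 2 * m' 0)
    (htail_l : ∀ i, 1 ≤ i → l i = l' i) (htail_m : ∀ i, 1 ≤ i → m i = m' i) :
    kostka N l m = kostka N' l' m' :=
  kostka_stable_general N N' l m l' m' hl hm hl' hm' hm1 hm1' htail_l htail_m
end

section
/- Let q ≥ 2 be a prime power, let ε ∈ {+1,−1}, let m ≥ 1, and let λ_1 < λ_2 < ⋯ < λ_m be positive integers with λ_i ≥ i for all i. Set μ_i := λ_i + 1 − i and n := Σ_{i=1}^m μ_i, and define the positive real number d := ( ∏_{1≤j<i≤m} |(εq)^{λ_i} − (εq)^{λ_j}| · ∏_{i=1}^{n} |(εq)^i − 1| ) / ( ∏_{i=1}^{m} ∏_{j=1}^{λ_i} |(εq)^j − 1| · ∏_{k=2}^{m−1} q^{k(k−1)/2} ). Then d ≥ q^{ n(n−μ_m)/2 − 4m }.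 -/
open Finset

/-- Gauss sum over `Icc 1 N`. -/
lemma gauss_icc (N : ℕ) : 2 * ∑ j ∈ Finset.Icc 1 N, j = N * (N + 1) := by
  have h : ∑ j ∈ Finset.Icc 1 N, j = ∑ j ∈ Finset.range (N + 1), j := by
    apply Finset.sum_subset
    · intro t ht
      simp only [Finset.mem_Icc] at ht
      simp only [Finset.mem_range]; omega
    · intro t ht hnt
      simp only [Finset.mem_range] at ht
      simp only [Finset.mem_Icc] at hnt
      omega
  rw [h, mul_comm, Finset.sum_range_id_mul_two]
  simp [Nat.add_sub_cancel, Nat.mul_comm]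

/-- Weierstrass product inequality. -/
lemma weier {α : Type*} (S : Finset α) (f : α → ℝ) (h0 : ∀ t ∈ S, 0 ≤ f t)
    (h1 : ∀ t ∈ S, f t ≤ 1) : 1 - ∑ t ∈ S, f t ≤ ∏ t ∈ S, (1 - f t) := by
  induction S using Finset.cons_induction with
  | empty => simp
  | cons a s ha ih =>
    simp only [Finset.prod_cons, Finset.sum_cons]
    have h0a := h0 a (Finset.mem_cons_self _ _)
    have h1a := h1 a (Finset.mem_cons_self _ _)
    have h0' : ∀ t ∈ s, 0 ≤ f t := fun t ht => h0 t (Finset.mem_cons_of_mem ht)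
    have h1' : ∀ t ∈ s, f t ≤ 1 := fun t ht => h1 t (Finset.mem_cons_of_mem ht)
    have ihs := ih h0' h1'
    have hs0 : 0 ≤ ∑ t ∈ s, f t := Finset.sum_nonneg h0'
    have hp0 : (0:ℝ) ≤ ∏ t ∈ s, (1 - f t) :=
      Finset.prod_nonneg (fun t ht => by linarith [h1' t ht])
    nlinarith

/-- Geometric tail bound. -/
lemma geom_icc (x : ℝ) (h0 : 0 ≤ x) (h2 : x ≤ 1/2) (a N : ℕ) :
    ∑ t ∈ Finset.Icc a N, x ^ t ≤ 2 * x ^ a := by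
  have step : ∑ t ∈ Finset.Icc a N, x ^ t ≤ ∑ t ∈ Finset.Icc a N, x ^ a * (1/2 : ℝ) ^ (t - a) := by
    apply Finset.sum_le_sum
    intro t ht
    have hta : a ≤ t := (Finset.mem_Icc.mp ht).1
    have : x ^ t = x ^ a * x ^ (t - a) := by rw [← pow_add]; congr 1; omega
    rw [this]
    exact mul_le_mul_of_nonneg_left (pow_le_pow_left₀ h0 h2 _) (pow_nonneg h0 _)
  have step2 : ∑ t ∈ Finset.Icc a N, x ^ a * (1/2 : ℝ) ^ (t - a) ≤ x ^ a * 2 := by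
    rw [← Finset.mul_sum]
    apply mul_le_mul_of_nonneg_left _ (pow_nonneg h0 _)
    rw [← Finset.Ico_add_one_right_eq_Icc, Finset.sum_Ico_eq_sum_range]
    simp only [Nat.add_sub_cancel_left]
    exact sum_geometric_two_le _
  linarith

/-- Lower bound for the product `∏_{t=1}^N (1 - x^t)`. -/
lemma prodLowerIcc (x : ℝ) (h0 : 0 ≤ x) (h2 : x ≤ 1/2) (N : ℕ) :
    (9:ℝ)/32 ≤ ∏ t ∈ Finset.Icc 1 N, (1 - x ^ t) := by
  rcases le_or_gt N 2 with hN | hN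
  · interval_cases N
    · simp; norm_num
    · simp only [Finset.Icc_self, Finset.prod_singleton]
      nlinarith
    · have : Finset.Icc 1 2 = ({1, 2} : Finset ℕ) := by decide
      rw [this, Finset.prod_pair (by norm_num)]
      nlinarith
  · have hsplit : Finset.Icc 1 N = Finset.Icc 1 2 ∪ Finset.Ioc 2 N := by
      ext t
      simp only [Finset.mem_Icc, Finset.mem_union, Finset.mem_Ioc]
      omega
    have hdisj : Disjoint (Finset.Icc 1 2) (Finset.Ioc 2 N) := by
      rw [Finset.disjoint_left]
      intro t ht ht'
      simp only [Finset.mem_Icc] at ht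
      simp only [Finset.mem_Ioc] at ht'
      omega
    rw [hsplit, Finset.prod_union hdisj]
    have head : (3:ℝ)/8 ≤ ∏ t ∈ Finset.Icc 1 2, (1 - x ^ t) := by
      have : Finset.Icc 1 2 = ({1, 2} : Finset ℕ) := by decide
      rw [this, Finset.prod_pair (by norm_num)]
      have key : (0:ℝ) ≤ (1/2 - x) * (5/4 + x/2 - x^2) :=
        mul_nonneg (by linarith) (by nlinarith [sq_nonneg x])
      nlinarith [key]
    have tail : (3:ℝ)/4 ≤ ∏ t ∈ Finset.Ioc 2 N, (1 - x ^ t) := by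
      have hw := weier (Finset.Ioc 2 N) (fun t => x ^ t)
        (fun t _ => pow_nonneg h0 t)
        (fun t _ => pow_le_one₀ h0 (by linarith))
      have hsum : ∑ t ∈ Finset.Ioc 2 N, x ^ t ≤ 1/4 := by
        have he : Finset.Ioc 2 N = Finset.Icc 3 N := (Finset.Icc_add_one_left_eq_Ioc 2 N).symm
        rw [he]
        have hg := geom_icc x h0 h2 3 N
        have hx3 : x ^ 3 ≤ (1/2:ℝ) ^ 3 := pow_le_pow_left₀ h0 h2 3
        norm_num at hx3
        linarith
      linarith
    have head0 : (0:ℝ) ≤ ∏ t ∈ Finset.Icc 1 2, (1 - x ^ t) := by linarith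
    calc (9:ℝ)/32 = (3/8) * (3/4) := by norm_num
    _ ≤ _ := mul_le_mul head tail (by norm_num) head0

/-- Lower bound for products of `1 - x^{g a}` with `g` injective, values `≥ 1`. -/
lemma prodLowerInj {α : Type*} (x : ℝ) (h0 : 0 ≤ x) (h2 : x ≤ 1/2)
    (F : Finset α) (g : α → ℕ) (hg : Set.InjOn g F) (h1 : ∀ a ∈ F, 1 ≤ g a) :
    (9:ℝ)/32 ≤ ∏ a ∈ F, (1 - x ^ g a) := by
  classical
  have himg : ∏ a ∈ F, (1 - x ^ g a) = ∏ t ∈ F.image g, (1 - x ^ t) :=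
    (Finset.prod_image (f := fun t : ℕ => 1 - x ^ t) (fun a ha b hb h => hg ha hb h)).symm
  rw [himg]
  set T := F.image g with hT
  have hsub : T ⊆ Finset.Icc 1 (F.sup g) := by
    intro t ht
    obtain ⟨a, ha, rfl⟩ := Finset.mem_image.mp ht
    exact Finset.mem_Icc.mpr ⟨h1 a ha, Finset.le_sup ha⟩
  have hfull := prodLowerIcc x h0 h2 (F.sup g)
  rw [← Finset.prod_sdiff hsub] at hfull
  have hT0 : 0 ≤ ∏ t ∈ T, (1 - x ^ t) :=
    Finset.prod_nonneg (fun t _ => by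
      have : x ^ t ≤ 1 := pow_le_one₀ h0 (by linarith)
      linarith)
  have hD1 : ∏ t ∈ Finset.Icc 1 (F.sup g) \ T, (1 - x ^ t) ≤ 1 :=
    Finset.prod_le_one
      (fun t _ => by
        have : x ^ t ≤ 1 := pow_le_one₀ h0 (by linarith)
        linarith)
      (fun t _ => by linarith [pow_nonneg h0 t])
  nlinarith

/-- Upper bound for products of `1 + x^{g a}` with `g` injective, values `≥ 1`. -/
lemma prodUpperInj {α : Type*} (x : ℝ) (h0 : 0 ≤ x) (h2 : x ≤ 1/2)
    (F : Finset α) (g : α → ℕ) (hg : Set.InjOn g F) (h1 : ∀ a ∈ F, 1 ≤ g a) :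
    ∏ a ∈ F, (1 + x ^ g a) ≤ 32/9 := by
  have hlow := prodLowerInj x h0 h2 F g hg h1
  have hpos : (0:ℝ) < ∏ a ∈ F, (1 - x ^ g a) := lt_of_lt_of_le (by norm_num) hlow
  have key : (∏ a ∈ F, (1 + x ^ g a)) * (∏ a ∈ F, (1 - x ^ g a)) ≤ 1 := by
    rw [← Finset.prod_mul_distrib]
    apply Finset.prod_le_one
    · intro a _
      have hle : x ^ g a ≤ 1 := pow_le_one₀ h0 (by linarith)
      nlinarith [pow_nonneg h0 (g a)]
    · intro a _
      nlinarith [pow_nonneg h0 (g a), pow_le_one₀ h0 (show x ≤ 1 by linarith) (n := g a)]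
  calc ∏ a ∈ F, (1 + x ^ g a) ≤ 1 / ∏ a ∈ F, (1 - x ^ g a) := by
        rw [le_div_iff₀ hpos]; exact key
  _ ≤ 1 / (9/32) := one_div_le_one_div_of_le (by norm_num) hlow
  _ = 32/9 := by norm_num

open Finset

/-- Step lemma: strictly monotone `L : Fin m → ℕ` grows at least by the index difference. -/
lemma strictMono_fin_step {m : ℕ} (L : Fin m → ℕ) (hL : StrictMono L) :
    ∀ (d : ℕ) (j : Fin m) (h : (j : ℕ) + d < m), L j + d ≤ L ⟨(j : ℕ) + d, h⟩ := by
  intro d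
  induction d with
  | zero => intro j h; simp
  | succ k ih =>
    intro j h
    have h1 : (j : ℕ) + k < m := by omega
    have h2 := ih j h1
    have h3 : L ⟨(j : ℕ) + k, h1⟩ < L ⟨(j : ℕ) + k + 1, h⟩ := by
      apply hL
      simp [Fin.lt_def]
    show L j + (k + 1) ≤ L ⟨(j : ℕ) + k + 1, h⟩
    omega

lemma comb_key (m : ℕ) (hm : 1 ≤ m) (L : Fin m → ℕ) (hL : StrictMono L)
    (hLi : ∀ i : Fin m, (i : ℕ) + 1 ≤ L i) (n : ℕ) (hn : n = ∑ i : Fin m, (L i - (i : ℕ))) :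
    n * (n - (L ⟨m - 1, by omega⟩ - (m - 1))) + 2 * (∑ i : Fin m, ∑ j ∈ Finset.Icc 1 (L i), j)
      + 2 * (∑ k ∈ Finset.Icc 2 (m - 1), k * (k - 1) / 2)
    ≤ 2 * (∑ i : Fin m, (i : ℕ) * L i) + 2 * (∑ j ∈ Finset.Icc 1 n, j) := by
  have hlast : m - 1 < m := by omega
  set last : Fin m := ⟨m - 1, hlast⟩ with hlastdef
  -- basic facts
  have hmono : ∀ i : Fin m, L i + ((m - 1) - (i : ℕ)) ≤ L last := by
    intro i
    have hi : (i : ℕ) ≤ m - 1 := by have := i.isLt; omega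
    have h := strictMono_fin_step L hL ((m - 1) - (i : ℕ)) i (by omega)
    have he : (i : ℕ) + ((m - 1) - (i : ℕ)) = m - 1 := by omega
    simp only [he] at h
    exact h
  have hmL : m - 1 ≤ L last := by have := hLi last; simp [hlastdef] at this ⊢; omega
  have hμn : L last - (m - 1) ≤ n := by
    have h1 : L last - ((last : Fin m) : ℕ) ≤ ∑ i : Fin m, (L i - (i : ℕ)) :=
      Finset.single_le_sum (f := fun i : Fin m => L i - (i : ℕ))
        (fun i _ => Nat.zero_le _) (Finset.mem_univ last)
    simp only [hlastdef] at h1 ⊢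
    omega
  -- Gauss identities at ℕ level
  have gauss_icc : ∀ N : ℕ, 2 * ∑ j ∈ Finset.Icc 1 N, j = N * (N + 1) := by
    intro N
    have h : ∑ j ∈ Finset.Icc 1 N, j = ∑ j ∈ Finset.range (N + 1), j := by
      apply Finset.sum_subset
      · intro t ht; simp only [Finset.mem_Icc] at ht; simp only [Finset.mem_range]; omega
      · intro t ht hnt
        simp only [Finset.mem_range] at ht
        simp only [Finset.mem_Icc] at hnt
        omega
    rw [h, mul_comm, Finset.sum_range_id_mul_two]
    simp [Nat.add_sub_cancel, Nat.mul_comm]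
  -- move to ℤ
  zify [hmL, hμn, hm]
  -- ℤ abbreviations
  have Z1 : (2:ℤ) * ∑ i : Fin m, ∑ j ∈ Finset.Icc 1 (L i), (j : ℤ)
      = ∑ i : Fin m, (L i : ℤ) * ((L i : ℤ) + 1) := by
    rw [Finset.mul_sum]
    apply Finset.sum_congr rfl
    intro i _
    have := gauss_icc (L i)
    have h2 : ((2 * ∑ j ∈ Finset.Icc 1 (L i), j : ℕ) : ℤ) = ((L i * (L i + 1) : ℕ) : ℤ) := by
      exact_mod_cast congrArg (fun t : ℕ => (t : ℤ)) this
    push_cast at h2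
    linarith
  have Z2 : (2:ℤ) * ∑ j ∈ Finset.Icc 1 n, (j : ℤ) = (n : ℤ) * ((n : ℤ) + 1) := by
    have := gauss_icc n
    have h2 : ((2 * ∑ j ∈ Finset.Icc 1 n, j : ℕ) : ℤ) = ((n * (n + 1) : ℕ) : ℤ) := by
      exact_mod_cast congrArg (fun t : ℕ => (t : ℤ)) this
    push_cast at h2
    linarith
  have Z3 : (2:ℤ) * ∑ k ∈ Finset.Icc 2 (m - 1), ((k : ℤ) * (((k - 1 : ℕ)) : ℤ) / 2)
      ≤ ∑ k ∈ Finset.Icc 2 (m - 1), (k : ℤ) * ((k : ℤ) - 1) := by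
    rw [Finset.mul_sum]
    apply Finset.sum_le_sum
    intro k hk
    have hk2 : 2 ≤ k := (Finset.mem_Icc.mp hk).1
    have hsub : ((k - 1 : ℕ) : ℤ) = (k : ℤ) - 1 := by
      rw [Nat.cast_sub (by omega : 1 ≤ k)]; norm_num
    rw [hsub]
    have hkz : (2:ℤ) ≤ (k : ℤ) := by exact_mod_cast hk2
    have hnn : (0:ℤ) ≤ (k : ℤ) * ((k : ℤ) - 1) := by nlinarith
    generalize hgen : (k : ℤ) * ((k : ℤ) - 1) = a at hnn ⊢
    omega
  have Z4 : (n : ℤ) = ∑ i : Fin m, ((L i : ℤ) - (i : ℕ)) := by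
    rw [hn]
    push_cast
    apply Finset.sum_congr rfl
    intro i _
    rw [Nat.cast_sub (by have := hLi i; omega)]
  have Z5 : ∑ i : Fin m, (L i : ℤ) * ((L i : ℤ) + 1)
      = 2 * (∑ i : Fin m, ((i : ℕ) : ℤ) * (L i : ℤ))
        + ∑ i : Fin m, ((L i : ℤ) - (i : ℕ)) ^ 2
        + ∑ i : Fin m, ((L i : ℤ) - (i : ℕ))
        - ∑ i : Fin m, ((i : ℕ) : ℤ) * (((i : ℕ) : ℤ) - 1) := by
    rw [Finset.mul_sum, ← Finset.sum_add_distrib, ← Finset.sum_add_distrib,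
      ← Finset.sum_sub_distrib]
    apply Finset.sum_congr rfl
    intro i _
    ring
  have Z6 : ∑ i : Fin m, ((i : ℕ) : ℤ) * (((i : ℕ) : ℤ) - 1)
      = ∑ k ∈ Finset.Icc 2 (m - 1), (k : ℤ) * ((k : ℤ) - 1) := by
    rw [Fin.sum_univ_eq_sum_range (fun k => (k : ℤ) * ((k : ℤ) - 1)) m]
    symm
    apply Finset.sum_subset
    · intro k hk
      simp only [Finset.mem_Icc] at hk
      simp only [Finset.mem_range]; omega
    · intro k hk hnk
      simp only [Finset.mem_range] at hk
      simp only [Finset.mem_Icc] at hnk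
      have : k = 0 ∨ k = 1 := by omega
      rcases this with rfl | rfl <;> norm_num
  have Z7 : ∑ i : Fin m, ((L i : ℤ) - (i : ℕ)) ^ 2
      ≤ (n : ℤ) * ((L last : ℤ) - ((m : ℤ) - 1)) := by
    have hb : ∀ i : Fin m, ((L i : ℤ) - (i : ℕ)) ≤ (L last : ℤ) - ((m : ℤ) - 1) := by
      intro i
      have h := hmono i
      have hi : (i : ℕ) ≤ m - 1 := by have := i.isLt; omega
      omega
    have h0 : ∀ i : Fin m, (0:ℤ) ≤ (L i : ℤ) - (i : ℕ) := by
      intro i; have := hLi i; omega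
    calc ∑ i : Fin m, ((L i : ℤ) - (i : ℕ)) ^ 2
        ≤ ∑ i : Fin m, ((L i : ℤ) - (i : ℕ)) * ((L last : ℤ) - ((m : ℤ) - 1)) := by
          apply Finset.sum_le_sum
          intro i _
          have := hb i
          have := h0 i
          nlinarith
    _ = (∑ i : Fin m, ((L i : ℤ) - (i : ℕ))) * ((L last : ℤ) - ((m : ℤ) - 1)) := by
          rw [Finset.sum_mul]
    _ = (n : ℤ) * ((L last : ℤ) - ((m : ℤ) - 1)) := by rw [← Z4]
  -- conclude
  push_cast
  nlinarith [Z1, Z2, Z3, Z5, Z6, Z7]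

/-- Lower bound for the degree of the unipotent character of `SL_n^ε(q)` attached to a
set `A = {λ_1 < ⋯ < λ_m}` of positive integers with `λ_i ≥ i`: writing `μ_i = λ_i + 1 - i`
and `n = Σ μ_i`, the degree `d` satisfies `d ≥ q^{n(n-μ_m)/2 - 4m}`.
(Here `L i = λ_{i+1}` for `i : Fin m`, so `μ_{i+1} = L i - i`.) -/
theorem unipotent_degree_lower_bound (q : ℕ) (hq : IsPrimePow q) (hq2 : 2 ≤ q)
    (ε : ℝ) (hε : ε = 1 ∨ ε = -1)
    (m : ℕ) (hm : 1 ≤ m)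
    (L : Fin m → ℕ) (hL : StrictMono L) (hLi : ∀ i : Fin m, (i : ℕ) + 1 ≤ L i)
    (n : ℕ) (hn : n = ∑ i : Fin m, (L i - (i : ℕ)))
    (d : ℝ)
    (hd : d = ((∏ i : Fin m, ∏ j ∈ Finset.univ.filter (fun j : Fin m => j < i),
            |(ε * q) ^ (L i) - (ε * q) ^ (L j)|) *
          ∏ i ∈ Finset.Icc 1 n, |(ε * q) ^ i - 1|) /
        ((∏ i : Fin m, ∏ j ∈ Finset.Icc 1 (L i), |(ε * q) ^ j - 1|) *
          ∏ k ∈ Finset.Icc 2 (m - 1), (q : ℝ) ^ (k * (k - 1) / 2))) :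
    (q : ℝ) ^ (((n * (n - (L ⟨m - 1, by omega⟩ - (m - 1))) : ℕ) : ℝ) / 2 - 4 * (m : ℝ))
      ≤ d := by
  have h0m : 0 < m := hm
  have hQ2 : (2:ℝ) ≤ (q:ℝ) := by exact_mod_cast hq2
  have hQ0 : (0:ℝ) < (q:ℝ) := by linarith
  have hQ1 : (1:ℝ) < (q:ℝ) := by linarith
  have hx0 : (0:ℝ) < ((q:ℝ))⁻¹ := inv_pos.mpr hQ0
  set x : ℝ := ((q:ℝ))⁻¹ with hxdef
  have hx2 : x ≤ 1/2 := by
    rw [hxdef]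
    calc ((q:ℝ))⁻¹ ≤ (2:ℝ)⁻¹ := inv_anti₀ (by norm_num) hQ2
    _ = 1/2 := by norm_num
  have hqx : ∀ k : ℕ, (q:ℝ)^k * x^k = 1 := by
    intro k; rw [hxdef, ← mul_pow, mul_inv_cancel₀ (ne_of_gt hQ0), one_pow]
  have hεabs : |ε| = 1 := by rcases hε with h | h <;> simp [h]
  have habs : ∀ a : ℕ, |(ε * (q:ℝ)) ^ a| = (q:ℝ) ^ a := by
    intro a; rw [abs_pow, abs_mul, hεabs, one_mul, abs_of_pos hQ0]
  -- per-i lower bound for the pair products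
  have pair_lb : ∀ i : Fin m,
      (q:ℝ) ^ ((i : ℕ) * L i) * (if (i : ℕ) = 0 then (1:ℝ) else 9/32)
        ≤ ∏ j ∈ Finset.univ.filter (fun j : Fin m => j < i),
            |(ε * (q:ℝ)) ^ (L i) - (ε * (q:ℝ)) ^ (L j)| := by
    intro i
    by_cases hi : (i : ℕ) = 0
    · have hempty : Finset.univ.filter (fun j : Fin m => j < i) = ∅ := by
        apply Finset.filter_eq_empty_iff.mpr
        intro j _
        rw [Fin.lt_def]
        omega
      rw [hempty, Finset.prod_empty, if_pos hi, hi]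
      simp
    · rw [if_neg hi]
      have hcard : (Finset.univ.filter (fun j : Fin m => j < i)).card = (i : ℕ) := by
        have h : Finset.univ.filter (fun j : Fin m => j < i) = Finset.Iio i := by
          ext j; simp
        rw [h, Fin.card_Iio]
      have hfac : ∀ j ∈ Finset.univ.filter (fun j : Fin m => j < i),
          (q:ℝ) ^ (L i) * (1 - x ^ (L i - L j))
            ≤ |(ε * (q:ℝ)) ^ (L i) - (ε * (q:ℝ)) ^ (L j)| := by
        intro j hj
        have hji : j < i := (Finset.mem_filter.mp hj).2
        have hLji : L j < L i := hL hji
        have key : (q:ℝ) ^ (L i) * x ^ (L i - L j) = (q:ℝ) ^ (L j) := by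
          have h1 : (q:ℝ) ^ (L i) = (q:ℝ) ^ (L j) * (q:ℝ) ^ (L i - L j) := by
            rw [← pow_add]; congr 1; omega
          rw [h1, mul_assoc, hqx, mul_one]
        calc (q:ℝ) ^ (L i) * (1 - x ^ (L i - L j))
            = (q:ℝ) ^ (L i) - (q:ℝ) ^ (L j) := by rw [mul_one_sub, key]
        _ = |(ε * (q:ℝ)) ^ (L i)| - |(ε * (q:ℝ)) ^ (L j)| := by rw [habs, habs]
        _ ≤ _ := abs_sub_abs_le_abs_sub _ _
      have hnn : ∀ j ∈ Finset.univ.filter (fun j : Fin m => j < i),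
          0 ≤ (q:ℝ) ^ (L i) * (1 - x ^ (L i - L j)) := by
        intro j _
        have h1 : x ^ (L i - L j) ≤ 1 := pow_le_one₀ hx0.le (by linarith)
        have h2 : (0:ℝ) ≤ (q:ℝ) ^ (L i) := pow_nonneg hQ0.le _
        nlinarith
      have step1 := Finset.prod_le_prod hnn hfac
      rw [Finset.prod_mul_distrib, Finset.prod_const, hcard] at step1
      have step3 : (9:ℝ)/32 ≤ ∏ j ∈ Finset.univ.filter (fun j : Fin m => j < i),
          (1 - x ^ (L i - L j)) := by
        apply prodLowerInj x hx0.le hx2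
        · intro j1 h1 j2 h2 heq
          simp only [Finset.coe_filter, Set.mem_setOf_eq, Finset.mem_univ, true_and] at h1 h2
          have e1 : L j1 < L i := hL h1
          have e2 : L j2 < L i := hL h2
          have heq' : L i - L j1 = L i - L j2 := heq
          have : L j1 = L j2 := by omega
          exact hL.injective this
        · intro j hj
          have hji : j < i := (Finset.mem_filter.mp hj).2
          have := hL hji
          omega
      calc (q:ℝ) ^ ((i:ℕ) * L i) * (9/32)
          ≤ ((q:ℝ) ^ (L i)) ^ (i:ℕ) * ∏ j ∈ Finset.univ.filter (fun j : Fin m => j < i),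
              (1 - x ^ (L i - L j)) := by
            rw [← pow_mul, mul_comm (i:ℕ) (L i)]
            exact mul_le_mul_of_nonneg_left step3 (by positivity)
      _ ≤ _ := step1
  -- product of the if-factors
  have hR : ∏ i : Fin m, (if (i : ℕ) = 0 then (1:ℝ) else 9/32) = (9/32:ℝ)^(m-1) := by
    rw [← Finset.mul_prod_erase Finset.univ _ (Finset.mem_univ (⟨0, h0m⟩ : Fin m))]
    rw [if_pos rfl, one_mul]
    have hcongr : ∀ i ∈ Finset.univ.erase (⟨0, h0m⟩ : Fin m),
        (if (i : ℕ) = 0 then (1:ℝ) else 9/32) = 9/32 := by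
      intro i hi
      rw [if_neg]
      intro h
      exact (Finset.mem_erase.mp hi).1 (Fin.ext h)
    rw [Finset.prod_congr rfl hcongr, Finset.prod_const,
      Finset.card_erase_of_mem (Finset.mem_univ _), Finset.card_univ, Fintype.card_fin]
  -- main numerator bounds
  have hN1 : (q:ℝ) ^ (∑ i : Fin m, (i:ℕ) * L i) * (9/32:ℝ)^(m-1)
      ≤ ∏ i : Fin m, ∏ j ∈ Finset.univ.filter (fun j : Fin m => j < i),
          |(ε * (q:ℝ)) ^ (L i) - (ε * (q:ℝ)) ^ (L j)| := by
    calc (q:ℝ) ^ (∑ i : Fin m, (i:ℕ) * L i) * (9/32:ℝ)^(m-1)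
        = ∏ i : Fin m, ((q:ℝ) ^ ((i:ℕ) * L i) * (if (i:ℕ) = 0 then (1:ℝ) else 9/32)) := by
          rw [Finset.prod_mul_distrib, Finset.prod_pow_eq_pow_sum, hR]
    _ ≤ _ := Finset.prod_le_prod
          (fun i _ => mul_nonneg (pow_nonneg hQ0.le _) (by split <;> norm_num))
          (fun i _ => pair_lb i)
  have hN2 : (q:ℝ) ^ (∑ j ∈ Finset.Icc 1 n, j) * (9/32:ℝ)
      ≤ ∏ i ∈ Finset.Icc 1 n, |(ε * (q:ℝ)) ^ i - 1| := by
    have hfac : ∀ i ∈ Finset.Icc 1 n, (q:ℝ)^i * (1 - x^i) ≤ |(ε * (q:ℝ))^i - 1| := by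
      intro i _
      calc (q:ℝ)^i * (1 - x^i) = (q:ℝ)^i - 1 := by rw [mul_one_sub, hqx i]
      _ = |(ε * (q:ℝ))^i| - |(1:ℝ)| := by rw [habs, abs_one]
      _ ≤ _ := abs_sub_abs_le_abs_sub _ _
    have hnn : ∀ i ∈ Finset.Icc 1 n, 0 ≤ (q:ℝ)^i * (1 - x^i) := by
      intro i _
      have h1 : x^i ≤ 1 := pow_le_one₀ hx0.le (by linarith)
      have h2 : (0:ℝ) ≤ (q:ℝ)^i := pow_nonneg hQ0.le i
      nlinarith
    have step1 := Finset.prod_le_prod hnn hfac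
    rw [Finset.prod_mul_distrib, Finset.prod_pow_eq_pow_sum] at step1
    refine le_trans ?_ step1
    exact mul_le_mul_of_nonneg_left (prodLowerIcc x hx0.le hx2 n) (by positivity)
  -- denominator bounds
  have hD1 : (∏ i : Fin m, ∏ j ∈ Finset.Icc 1 (L i), |(ε * (q:ℝ))^j - 1|)
      ≤ (q:ℝ) ^ (∑ i : Fin m, ∑ j ∈ Finset.Icc 1 (L i), j) * (32/9:ℝ)^m := by
    have hper : ∀ i : Fin m, ∏ j ∈ Finset.Icc 1 (L i), |(ε * (q:ℝ))^j - 1|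
        ≤ (q:ℝ) ^ (∑ j ∈ Finset.Icc 1 (L i), j) * (32/9:ℝ) := by
      intro i
      have hfac : ∀ j ∈ Finset.Icc 1 (L i), |(ε * (q:ℝ))^j - 1| ≤ (q:ℝ)^j * (1 + x^j) := by
        intro j _
        calc |(ε * (q:ℝ))^j - 1| ≤ |(ε * (q:ℝ))^j| + |(1:ℝ)| := abs_sub _ _
        _ = (q:ℝ)^j + 1 := by rw [habs, abs_one]
        _ = (q:ℝ)^j * (1 + x^j) := by rw [mul_one_add, hqx j]
      have step1 := Finset.prod_le_prod (fun j _ => abs_nonneg _) hfac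
      rw [Finset.prod_mul_distrib, Finset.prod_pow_eq_pow_sum] at step1
      refine le_trans step1 ?_
      refine mul_le_mul_of_nonneg_left ?_ (by positivity)
      exact prodUpperInj x hx0.le hx2 (Finset.Icc 1 (L i)) (fun j => j)
        (fun a _ b _ h => h) (fun j hj => (Finset.mem_Icc.mp hj).1)
    calc ∏ i : Fin m, ∏ j ∈ Finset.Icc 1 (L i), |(ε * (q:ℝ))^j - 1|
        ≤ ∏ i : Fin m, ((q:ℝ) ^ (∑ j ∈ Finset.Icc 1 (L i), j) * (32/9:ℝ)) :=
          Finset.prod_le_prod (fun i _ => Finset.prod_nonneg fun j _ => abs_nonneg _)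
            (fun i _ => hper i)
    _ = _ := by
        rw [Finset.prod_mul_distrib, Finset.prod_pow_eq_pow_sum, Finset.prod_const,
          Finset.card_univ, Fintype.card_fin]
  have hD2 : ∏ k ∈ Finset.Icc 2 (m-1), (q:ℝ) ^ (k*(k-1)/2)
      = (q:ℝ) ^ (∑ k ∈ Finset.Icc 2 (m-1), k*(k-1)/2) :=
    Finset.prod_pow_eq_pow_sum _ _ _
  -- positivity of the denominator
  have hdpos1 : 0 < ∏ i : Fin m, ∏ j ∈ Finset.Icc 1 (L i), |(ε * (q:ℝ))^j - 1| := by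
    apply Finset.prod_pos; intro i _
    apply Finset.prod_pos; intro j hj
    have hj1 : 1 ≤ j := (Finset.mem_Icc.mp hj).1
    have hne : (ε * (q:ℝ))^j ≠ 1 := by
      intro h
      have h2 := habs j
      rw [h, abs_one] at h2
      have h1 : (1:ℝ) < (q:ℝ)^j := one_lt_pow₀ hQ1 (by omega)
      linarith
    exact abs_pos.mpr (sub_ne_zero.mpr hne)
  have hdpos2 : 0 < ∏ k ∈ Finset.Icc 2 (m-1), (q:ℝ)^(k*(k-1)/2) :=
    Finset.prod_pos fun k _ => pow_pos hQ0 _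
  -- combine numerator
  have hnum : (q:ℝ) ^ ((∑ i : Fin m, (i:ℕ) * L i) + (∑ j ∈ Finset.Icc 1 n, j)) * (9/32:ℝ)^m
      ≤ (∏ i : Fin m, ∏ j ∈ Finset.univ.filter (fun j : Fin m => j < i),
            |(ε * (q:ℝ)) ^ (L i) - (ε * (q:ℝ)) ^ (L j)|) *
          ∏ i ∈ Finset.Icc 1 n, |(ε * (q:ℝ)) ^ i - 1| := by
    have h9 : (9/32:ℝ)^m = (9/32:ℝ)^(m-1) * (9/32:ℝ) := by
      rw [← pow_succ, Nat.sub_add_cancel hm]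
    have hN1nn : (0:ℝ) ≤ ∏ i : Fin m, ∏ j ∈ Finset.univ.filter (fun j : Fin m => j < i),
        |(ε * (q:ℝ)) ^ (L i) - (ε * (q:ℝ)) ^ (L j)| :=
      Finset.prod_nonneg fun i _ => Finset.prod_nonneg fun j _ => abs_nonneg _
    have hmul := mul_le_mul hN1 hN2 (by positivity) hN1nn
    calc (q:ℝ) ^ ((∑ i : Fin m, (i:ℕ) * L i) + (∑ j ∈ Finset.Icc 1 n, j)) * (9/32:ℝ)^m
        = ((q:ℝ) ^ (∑ i : Fin m, (i:ℕ) * L i) * (9/32:ℝ)^(m-1)) *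
            ((q:ℝ) ^ (∑ j ∈ Finset.Icc 1 n, j) * (9/32:ℝ)) := by
          rw [pow_add, h9]; ring
    _ ≤ _ := hmul
  -- combine denominator
  have hden : (∏ i : Fin m, ∏ j ∈ Finset.Icc 1 (L i), |(ε * (q:ℝ))^j - 1|) *
        ∏ k ∈ Finset.Icc 2 (m-1), (q:ℝ) ^ (k*(k-1)/2)
      ≤ (q:ℝ) ^ ((∑ i : Fin m, ∑ j ∈ Finset.Icc 1 (L i), j)
          + (∑ k ∈ Finset.Icc 2 (m-1), k*(k-1)/2)) * (32/9:ℝ)^m := by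
    rw [hD2, pow_add]
    calc (∏ i : Fin m, ∏ j ∈ Finset.Icc 1 (L i), |(ε * (q:ℝ))^j - 1|) *
          (q:ℝ) ^ (∑ k ∈ Finset.Icc 2 (m-1), k*(k-1)/2)
        ≤ ((q:ℝ) ^ (∑ i : Fin m, ∑ j ∈ Finset.Icc 1 (L i), j) * (32/9:ℝ)^m) *
          (q:ℝ) ^ (∑ k ∈ Finset.Icc 2 (m-1), k*(k-1)/2) :=
          mul_le_mul_of_nonneg_right hD1 (by positivity)
    _ = _ := by ring
  have hfrac : ((q:ℝ) ^ ((∑ i : Fin m, (i:ℕ) * L i) + (∑ j ∈ Finset.Icc 1 n, j)) * (9/32:ℝ)^m) /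
        ((q:ℝ) ^ ((∑ i : Fin m, ∑ j ∈ Finset.Icc 1 (L i), j)
          + (∑ k ∈ Finset.Icc 2 (m-1), k*(k-1)/2)) * (32/9:ℝ)^m)
      ≤ ((∏ i : Fin m, ∏ j ∈ Finset.univ.filter (fun j : Fin m => j < i),
            |(ε * (q:ℝ)) ^ (L i) - (ε * (q:ℝ)) ^ (L j)|) *
          ∏ i ∈ Finset.Icc 1 n, |(ε * (q:ℝ)) ^ i - 1|) /
        ((∏ i : Fin m, ∏ j ∈ Finset.Icc 1 (L i), |(ε * (q:ℝ))^j - 1|) *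
          ∏ k ∈ Finset.Icc 2 (m-1), (q:ℝ) ^ (k*(k-1)/2)) :=
    div_le_div₀
      (mul_nonneg
        (Finset.prod_nonneg fun i _ => Finset.prod_nonneg fun j _ => abs_nonneg _)
        (Finset.prod_nonneg fun i _ => abs_nonneg _))
      hnum (mul_pos hdpos1 hdpos2) hden
  -- rational constant vs q^4
  have hQ4 : (1:ℝ)/(q:ℝ)^4 ≤ 81/1024 := by
    have h16 : (16:ℝ) ≤ (q:ℝ)^4 := by
      have h := pow_le_pow_left₀ (by norm_num : (0:ℝ) ≤ 2) hQ2 4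
      norm_num at h
      exact h
    calc (1:ℝ)/(q:ℝ)^4 ≤ 1/16 := one_div_le_one_div_of_le (by norm_num) h16
    _ ≤ 81/1024 := by norm_num
  -- pure q-power lower bound for the constant-laden fraction
  have hmain : (q:ℝ) ^ ((∑ i : Fin m, (i:ℕ) * L i) + (∑ j ∈ Finset.Icc 1 n, j)) /
        (q:ℝ) ^ (((∑ i : Fin m, ∑ j ∈ Finset.Icc 1 (L i), j)
          + (∑ k ∈ Finset.Icc 2 (m-1), k*(k-1)/2)) + 4*m)
      ≤ ((q:ℝ) ^ ((∑ i : Fin m, (i:ℕ) * L i) + (∑ j ∈ Finset.Icc 1 n, j)) * (9/32:ℝ)^m) /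
        ((q:ℝ) ^ ((∑ i : Fin m, ∑ j ∈ Finset.Icc 1 (L i), j)
          + (∑ k ∈ Finset.Icc 2 (m-1), k*(k-1)/2)) * (32/9:ℝ)^m) := by
    have hA0 : (0:ℝ) < (q:ℝ) ^ ((∑ i : Fin m, (i:ℕ) * L i) + (∑ j ∈ Finset.Icc 1 n, j)) :=
      pow_pos hQ0 _
    have hC0 : (0:ℝ) < (q:ℝ) ^ ((∑ i : Fin m, ∑ j ∈ Finset.Icc 1 (L i), j)
          + (∑ k ∈ Finset.Icc 2 (m-1), k*(k-1)/2)) := pow_pos hQ0 _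
    have e1 : ((q:ℝ) ^ ((∑ i : Fin m, (i:ℕ) * L i) + (∑ j ∈ Finset.Icc 1 n, j)) * (9/32:ℝ)^m) /
        ((q:ℝ) ^ ((∑ i : Fin m, ∑ j ∈ Finset.Icc 1 (L i), j)
          + (∑ k ∈ Finset.Icc 2 (m-1), k*(k-1)/2)) * (32/9:ℝ)^m)
        = ((q:ℝ) ^ ((∑ i : Fin m, (i:ℕ) * L i) + (∑ j ∈ Finset.Icc 1 n, j)) /
            (q:ℝ) ^ ((∑ i : Fin m, ∑ j ∈ Finset.Icc 1 (L i), j)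
              + (∑ k ∈ Finset.Icc 2 (m-1), k*(k-1)/2))) * (81/1024:ℝ)^m := by
      have h8 : (81/1024:ℝ)^m = (9/32:ℝ)^m / (32/9:ℝ)^m := by
        rw [← div_pow]; norm_num
      rw [h8, div_mul_div_comm]
    have e2 : (q:ℝ) ^ ((∑ i : Fin m, (i:ℕ) * L i) + (∑ j ∈ Finset.Icc 1 n, j)) /
        (q:ℝ) ^ (((∑ i : Fin m, ∑ j ∈ Finset.Icc 1 (L i), j)
          + (∑ k ∈ Finset.Icc 2 (m-1), k*(k-1)/2)) + 4*m)
        = ((q:ℝ) ^ ((∑ i : Fin m, (i:ℕ) * L i) + (∑ j ∈ Finset.Icc 1 n, j)) /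
            (q:ℝ) ^ ((∑ i : Fin m, ∑ j ∈ Finset.Icc 1 (L i), j)
              + (∑ k ∈ Finset.Icc 2 (m-1), k*(k-1)/2))) * ((1:ℝ)/((q:ℝ)^4)^m) := by
      have hsplit : (q:ℝ) ^ (((∑ i : Fin m, ∑ j ∈ Finset.Icc 1 (L i), j)
          + (∑ k ∈ Finset.Icc 2 (m-1), k*(k-1)/2)) + 4*m)
          = (q:ℝ) ^ ((∑ i : Fin m, ∑ j ∈ Finset.Icc 1 (L i), j)
          + (∑ k ∈ Finset.Icc 2 (m-1), k*(k-1)/2)) * ((q:ℝ)^4)^m := by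
        rw [pow_add, pow_mul]
      rw [hsplit]
      ring
    rw [e1, e2]
    refine mul_le_mul_of_nonneg_left ?_ (le_of_lt (div_pos hA0 hC0))
    calc (1:ℝ)/((q:ℝ)^4)^m = ((1:ℝ)/(q:ℝ)^4)^m := by rw [div_pow, one_pow]
    _ ≤ (81/1024:ℝ)^m := pow_le_pow_left₀ (by positivity) hQ4 m
  -- rewrite as rpow
  have hrpow : (q:ℝ) ^ ((∑ i : Fin m, (i:ℕ) * L i) + (∑ j ∈ Finset.Icc 1 n, j)) /
        (q:ℝ) ^ (((∑ i : Fin m, ∑ j ∈ Finset.Icc 1 (L i), j)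
          + (∑ k ∈ Finset.Icc 2 (m-1), k*(k-1)/2)) + 4*m)
      = (q:ℝ) ^ (((((∑ i : Fin m, (i:ℕ) * L i) + (∑ j ∈ Finset.Icc 1 n, j)) : ℕ) : ℝ)
          - (((((∑ i : Fin m, ∑ j ∈ Finset.Icc 1 (L i), j)
          + (∑ k ∈ Finset.Icc 2 (m-1), k*(k-1)/2)) + 4*m) : ℕ) : ℝ)) := by
    rw [Real.rpow_sub hQ0, Real.rpow_natCast, Real.rpow_natCast]
  -- exponent comparison
  have hkey := comb_key m hm L hL hLi n hn
  have hexp : ((n * (n - (L ⟨m - 1, by omega⟩ - (m - 1))) : ℕ) : ℝ) / 2 - 4 * (m : ℝ)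
      ≤ (((((∑ i : Fin m, (i:ℕ) * L i) + (∑ j ∈ Finset.Icc 1 n, j)) : ℕ) : ℝ)
          - (((((∑ i : Fin m, ∑ j ∈ Finset.Icc 1 (L i), j)
          + (∑ k ∈ Finset.Icc 2 (m-1), k*(k-1)/2)) + 4*m) : ℕ) : ℝ)) := by
    have hkR : ((n * (n - (L ⟨m - 1, by omega⟩ - (m - 1))) : ℕ) : ℝ)
        + 2 * ((∑ i : Fin m, ∑ j ∈ Finset.Icc 1 (L i), j : ℕ) : ℝ)
        + 2 * ((∑ k ∈ Finset.Icc 2 (m-1), k*(k-1)/2 : ℕ) : ℝ)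
        ≤ 2 * ((∑ i : Fin m, (i:ℕ) * L i : ℕ) : ℝ)
          + 2 * ((∑ j ∈ Finset.Icc 1 n, j : ℕ) : ℝ) := by
      exact_mod_cast hkey
    push_cast
    push_cast at hkR
    linarith
  -- final chain
  calc (q:ℝ) ^ (((n * (n - (L ⟨m - 1, by omega⟩ - (m - 1))) : ℕ) : ℝ) / 2 - 4 * (m : ℝ))
      ≤ (q:ℝ) ^ (((((∑ i : Fin m, (i:ℕ) * L i) + (∑ j ∈ Finset.Icc 1 n, j)) : ℕ) : ℝ)
          - (((((∑ i : Fin m, ∑ j ∈ Finset.Icc 1 (L i), j)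
          + (∑ k ∈ Finset.Icc 2 (m-1), k*(k-1)/2)) + 4*m) : ℕ) : ℝ)) :=
        Real.rpow_le_rpow_of_exponent_le hQ1.le hexp
  _ = (q:ℝ) ^ ((∑ i : Fin m, (i:ℕ) * L i) + (∑ j ∈ Finset.Icc 1 n, j)) /
        (q:ℝ) ^ (((∑ i : Fin m, ∑ j ∈ Finset.Icc 1 (L i), j)
          + (∑ k ∈ Finset.Icc 2 (m-1), k*(k-1)/2)) + 4*m) := hrpow.symm
  _ ≤ _ := le_trans hmain (le_of_le_of_eq hfrac (by rw [hd]))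
end
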